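/- arXiv:1905.03169 — 6 statements merged into one kernel-verified Lean document; each statement's English description precedes it below -/
import Mathlib

section
/- Let θ : ℝ → ℝ be smooth with θ'(z) ≠ 0 for all z. Then the map Φ(x,y,z) = (z cos θ(y) + (x/θ'(y)) sin θ(y), −z sin θ(y) + (x/θ'(y)) cos θ(y), y) is a diffeomorphism of ℝ³ that pulls back the 1-form α = cos θ(z) dx − sin θ(z) dy to the standard contact form α_st = dz + x dy. -/
open Real

noncomputable section

/-- Points/vectors of `ℝ³`. -/
abbrev E3 : Type := ℝ × ℝ × ℝ

/-- The Euclidean dot product on `ℝ³`. -/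
def dot3 (a b : E3) : ℝ := a.1 * b.1 + a.2.1 * b.2.1 + a.2.2 * b.2.2

def e1 : E3 := (1, 0, 0)
def e2 : E3 := (0, 1, 0)
def e3 : E3 := (0, 0, 1)

/-- The value of the 2-form `dα` at `p` on vectors `u, v`, where
`α = V₁ dx + V₂ dy + V₃ dz`, i.e. `α_p(u) = ⟨V(p), u⟩`. -/
def dAlpha (V : E3 → E3) (p u v : E3) : ℝ :=
  dot3 (fderiv ℝ V p u) v - dot3 (fderiv ℝ V p v) u

/-- The value of the 3-form `α ∧ dα` at `p` on the standard basis of `ℝ³`;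
`α ∧ dα ≠ 0` at `p` iff this number is nonzero. -/
def wedge (V : E3 → E3) (p : E3) : ℝ :=
  dot3 (V p) e1 * dAlpha V p e2 e3
    - dot3 (V p) e2 * dAlpha V p e1 e3
    + dot3 (V p) e3 * dAlpha V p e1 e2

/-- The curl of the vector field `V` at `p`. -/
def curl (V : E3 → E3) (p : E3) : E3 :=
  ((fderiv ℝ V p e2).2.2 - (fderiv ℝ V p e3).2.1,
   (fderiv ℝ V p e3).1 - (fderiv ℝ V p e1).2.2,
   (fderiv ℝ V p e1).2.1 - (fderiv ℝ V p e2).1)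

/-- The line through `p` in direction `V p`. -/
def line (V : E3 → E3) (p : E3) : Set E3 := {q | ∃ t : ℝ, q = p + t • V p}

/-- `V` defines a line fibration of `ℝ³`: it is a unit vector field whose lines
are pairwise equal or disjoint (they automatically cover `ℝ³`). -/
def IsLineFibration (V : E3 → E3) : Prop :=
  (∀ p, dot3 (V p) (V p) = 1) ∧
    ∀ p q, line V p = line V q ∨ line V p ∩ line V q = ∅

set_option maxHeartbeats 1000000
/-- The explicit map `Φ` is a diffeomorphism of `ℝ³` pulling back
`α = cos θ(z) dx - sin θ(z) dy` to the standard contact form `dz + x dy`. -/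
theorem stmt_1 (θ : ℝ → ℝ) (hθ : ContDiff ℝ (⊤ : ℕ∞) θ) (hθ' : ∀ z, deriv θ z ≠ 0) :
    ∃ Φ : E3 ≃ₜ E3,
      (∀ p : E3, Φ p =
        (p.2.2 * cos (θ p.2.1) + p.1 / deriv θ p.2.1 * sin (θ p.2.1),
         -p.2.2 * sin (θ p.2.1) + p.1 / deriv θ p.2.1 * cos (θ p.2.1),
         p.2.1)) ∧
      ContDiff ℝ (⊤ : ℕ∞) (Φ : E3 → E3) ∧ ContDiff ℝ (⊤ : ℕ∞) (Φ.symm : E3 → E3) ∧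
      ∀ p u : E3,
        cos (θ ((Φ p).2.2)) * (fderiv ℝ (Φ : E3 → E3) p u).1
          - sin (θ ((Φ p).2.2)) * (fderiv ℝ (Φ : E3 → E3) p u).2.1
          = u.2.2 + p.1 * u.2.1 := by
  have hθ1 : ContDiff ℝ (((⊤ : ℕ∞) : WithTop ℕ∞) + 1) θ := hθ.of_le (by exact_mod_cast le_top)
  have hθd : Differentiable ℝ θ := (contDiff_succ_iff_deriv.mp hθ1).1
  have hg : ContDiff ℝ (⊤ : ℕ∞) (deriv θ) := (contDiff_succ_iff_deriv.mp hθ1).2.2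
  have hgd : Differentiable ℝ (deriv θ) := hg.differentiable (by simp)
  set F : E3 → E3 := fun p =>
    (p.2.2 * cos (θ p.2.1) + p.1 / deriv θ p.2.1 * sin (θ p.2.1),
     -p.2.2 * sin (θ p.2.1) + p.1 / deriv θ p.2.1 * cos (θ p.2.1),
     p.2.1) with hF
  set G : E3 → E3 := fun q =>
    (deriv θ q.2.2 * (q.1 * sin (θ q.2.2) + q.2.1 * cos (θ q.2.2)),
     q.2.2,
     q.1 * cos (θ q.2.2) - q.2.1 * sin (θ q.2.2)) with hG
  -- basic smooth pieces
  have hp1 : ContDiff ℝ ((⊤ : ℕ∞) : WithTop ℕ∞) (fun p : E3 => p.1) := contDiff_fst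
  have hp2 : ContDiff ℝ ((⊤ : ℕ∞) : WithTop ℕ∞) (fun p : E3 => p.2.1) := contDiff_fst.comp contDiff_snd
  have hp3 : ContDiff ℝ ((⊤ : ℕ∞) : WithTop ℕ∞) (fun p : E3 => p.2.2) := contDiff_snd.comp contDiff_snd
  have hc2 : ContDiff ℝ ((⊤ : ℕ∞) : WithTop ℕ∞) (fun p : E3 => cos (θ p.2.1)) :=
    Real.contDiff_cos.comp (hθ.comp hp2)
  have hs2 : ContDiff ℝ ((⊤ : ℕ∞) : WithTop ℕ∞) (fun p : E3 => sin (θ p.2.1)) :=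
    Real.contDiff_sin.comp (hθ.comp hp2)
  have hc3 : ContDiff ℝ ((⊤ : ℕ∞) : WithTop ℕ∞) (fun p : E3 => cos (θ p.2.2)) :=
    Real.contDiff_cos.comp (hθ.comp hp3)
  have hs3 : ContDiff ℝ ((⊤ : ℕ∞) : WithTop ℕ∞) (fun p : E3 => sin (θ p.2.2)) :=
    Real.contDiff_sin.comp (hθ.comp hp3)
  have hFcd : ContDiff ℝ ((⊤ : ℕ∞) : WithTop ℕ∞) F := by
    refine ContDiff.prodMk ?_ (ContDiff.prodMk ?_ hp2)
    · exact (hp3.mul hc2).add (((hp1.div (hg.comp hp2) fun p => hθ' _)).mul hs2)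
    · exact (hp3.neg.mul hs2).add (((hp1.div (hg.comp hp2) fun p => hθ' _)).mul hc2)
  have hGcd : ContDiff ℝ ((⊤ : ℕ∞) : WithTop ℕ∞) G := by
    refine ContDiff.prodMk ?_ (ContDiff.prodMk hp3 ?_)
    · exact (hg.comp hp3).mul ((hp1.mul hs3).add (hp2.mul hc3))
    · exact (hp1.mul hc3).sub (hp2.mul hs3)
  have hpyth : ∀ t : ℝ, sin t ^ 2 + cos t ^ 2 = 1 := sin_sq_add_cos_sq
  have hleft : Function.LeftInverse G F := by
    intro p
    obtain ⟨x, y, z⟩ := p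
    have hgy := hθ' y
    simp only [hF, hG, Prod.mk.injEq]
    refine ⟨?_, trivial, ?_⟩
    · field_simp
      linear_combination x * hpyth (θ y)
    · linear_combination z * hpyth (θ y)
  have hright : Function.RightInverse G F := by
    intro q
    obtain ⟨a, b, c⟩ := q
    have hgc := hθ' c
    simp only [hF, hG, Prod.mk.injEq]
    refine ⟨?_, ?_, trivial⟩
    · field_simp
      linear_combination a * hpyth (θ c)
    · field_simp
      linear_combination b * hpyth (θ c)
  refine ⟨⟨⟨F, G, hleft, hright⟩, hFcd.continuous, hGcd.continuous⟩, fun p => rfl, hFcd, hGcd,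
    ?_⟩
  intro p u
  obtain ⟨x, y, z⟩ := p
  -- one-dimensional derivatives at y
  have hθy : HasDerivAt θ (deriv θ y) y := (hθd y).hasDerivAt
  have hgy : HasDerivAt (deriv θ) (deriv (deriv θ) y) y := (hgd y).hasDerivAt
  have hcy : HasDerivAt (fun t => cos (θ t)) (-sin (θ y) * deriv θ y) y := hθy.cos
  have hsy : HasDerivAt (fun t => sin (θ t)) (cos (θ y) * deriv θ y) y := hθy.sin
  have hfy : HasDerivAt (fun t => (deriv θ t)⁻¹) (-deriv (deriv θ) y / deriv θ y ^ 2) y :=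
    hgy.inv (hθ' y)
  -- linear projections
  set π1 : E3 →L[ℝ] ℝ := ContinuousLinearMap.fst ℝ ℝ (ℝ × ℝ) with hπ1d
  set π2 : E3 →L[ℝ] ℝ :=
    (ContinuousLinearMap.fst ℝ ℝ ℝ).comp (ContinuousLinearMap.snd ℝ ℝ (ℝ × ℝ)) with hπ2d
  set π3 : E3 →L[ℝ] ℝ :=
    (ContinuousLinearMap.snd ℝ ℝ ℝ).comp (ContinuousLinearMap.snd ℝ ℝ (ℝ × ℝ)) with hπ3d
  have hπ1 : HasFDerivAt (fun p : E3 => p.1) π1 (x, y, z) := π1.hasFDerivAt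
  have hπ2 : HasFDerivAt (fun p : E3 => p.2.1) π2 (x, y, z) := π2.hasFDerivAt
  have hπ3 : HasFDerivAt (fun p : E3 => p.2.2) π3 (x, y, z) := π3.hasFDerivAt
  have hC : HasFDerivAt (fun p : E3 => cos (θ p.2.1)) ((-sin (θ y) * deriv θ y) • π2) (x, y, z) :=
    (hcy.comp_hasFDerivAt (x, y, z) hπ2 :)
  have hS : HasFDerivAt (fun p : E3 => sin (θ p.2.1)) ((cos (θ y) * deriv θ y) • π2) (x, y, z) :=
    (hsy.comp_hasFDerivAt (x, y, z) hπ2 :)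
  have hI : HasFDerivAt (fun p : E3 => (deriv θ p.2.1)⁻¹)
      ((-deriv (deriv θ) y / deriv θ y ^ 2) • π2) (x, y, z) :=
    (hfy.comp_hasFDerivAt (x, y, z) hπ2 :)
  have hA : HasFDerivAt (fun p : E3 => p.2.2 * cos (θ p.2.1) + p.1 / deriv θ p.2.1 * sin (θ p.2.1))
      ((z • ((-sin (θ y) * deriv θ y) • π2) + cos (θ y) • π3) +
        ((x * (deriv θ y)⁻¹) • ((cos (θ y) * deriv θ y) • π2) +
          sin (θ y) • (x • ((-deriv (deriv θ) y / deriv θ y ^ 2) • π2) + (deriv θ y)⁻¹ • π1)))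
      (x, y, z) := (hπ3.mul hC).add ((hπ1.mul hI).mul hS)
  have hB : HasFDerivAt
      (fun p : E3 => -p.2.2 * sin (θ p.2.1) + p.1 / deriv θ p.2.1 * cos (θ p.2.1))
      (((-z) • ((cos (θ y) * deriv θ y) • π2) + sin (θ y) • (-π3)) +
        ((x * (deriv θ y)⁻¹) • ((-sin (θ y) * deriv θ y) • π2) +
          cos (θ y) • (x • ((-deriv (deriv θ) y / deriv θ y ^ 2) • π2) + (deriv θ y)⁻¹ • π1)))
      (x, y, z) := (hπ3.neg.mul hS).add ((hπ1.mul hI).mul hC)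
  have hΦ : HasFDerivAt F (ContinuousLinearMap.prod
      ((z • ((-sin (θ y) * deriv θ y) • π2) + cos (θ y) • π3) +
        ((x * (deriv θ y)⁻¹) • ((cos (θ y) * deriv θ y) • π2) +
          sin (θ y) • (x • ((-deriv (deriv θ) y / deriv θ y ^ 2) • π2) + (deriv θ y)⁻¹ • π1)))
      (ContinuousLinearMap.prod
        (((-z) • ((cos (θ y) * deriv θ y) • π2) + sin (θ y) • (-π3)) +
          ((x * (deriv θ y)⁻¹) • ((-sin (θ y) * deriv θ y) • π2) +
            cos (θ y) • (x • ((-deriv (deriv θ) y / deriv θ y ^ 2) • π2) + (deriv θ y)⁻¹ • π1)))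
        π2)) (x, y, z) := hA.prodMk (hB.prodMk hπ2)
  have hfd := hΦ.fderiv
  show cos (θ y) * (fderiv ℝ F (x, y, z) u).1 - sin (θ y) * (fderiv ℝ F (x, y, z) u).2.1
      = u.2.2 + x * u.2.1
  rw [hfd]
  simp only [ContinuousLinearMap.prod_apply, ContinuousLinearMap.add_apply,
    ContinuousLinearMap.smul_apply, ContinuousLinearMap.coe_comp', Function.comp_apply,
    ContinuousLinearMap.coe_fst', ContinuousLinearMap.coe_snd', ContinuousLinearMap.neg_apply,
    smul_eq_mul, hπ1d, hπ2d, hπ3d]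
  have hgy0 := hθ' y
  field_simp
  linear_combination (deriv θ y ^ 2 * (u.2.1 * x + u.2.2)) * hpyth (θ y)
end
end

section
/- Let V : ℝ³ → S² be a smooth unit vector field defining a line fibration of ℝ³, and suppose the differential d_{p₀}V has rank 2 when restricted to the plane ξ_{p₀} = V(p₀)^⊥ at some point p₀. Then the fibration contains no line ℓ ≠ ℓ_{p₀} parallel to ℓ_{p₀}. -/
open Real

noncomputable section

def cross3 (a b : E3) : E3 :=
  (a.2.1 * b.2.2 - a.2.2 * b.2.1, a.2.2 * b.1 - a.1 * b.2.2, a.1 * b.2.1 - a.2.1 * b.1)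
lemma smul_comp1 (c : ℝ) (x : E3) : (c • x).1 = c * x.1 := rfl
lemma smul_comp2 (c : ℝ) (x : E3) : (c • x).2.1 = c * x.2.1 := rfl
lemma smul_comp3 (c : ℝ) (x : E3) : (c • x).2.2 = c * x.2.2 := rfl
lemma add_comp1 (x y : E3) : (x + y).1 = x.1 + y.1 := rfl
lemma add_comp2 (x y : E3) : (x + y).2.1 = x.2.1 + y.2.1 := rfl
lemma add_comp3 (x y : E3) : (x + y).2.2 = x.2.2 + y.2.2 := rfl
lemma sub_comp1 (x y : E3) : (x - y).1 = x.1 - y.1 := rfl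
lemma sub_comp2 (x y : E3) : (x - y).2.1 = x.2.1 - y.2.1 := rfl
lemma sub_comp3 (x y : E3) : (x - y).2.2 = x.2.2 - y.2.2 := rfl
lemma neg_comp1 (x : E3) : (-x).1 = -x.1 := rfl
lemma neg_comp2 (x : E3) : (-x).2.1 = -x.2.1 := rfl
lemma neg_comp3 (x : E3) : (-x).2.2 = -x.2.2 := rfl
lemma zero_comp1 : (0 : E3).1 = 0 := rfl
lemma zero_comp2 : (0 : E3).2.1 = 0 := rfl
lemma zero_comp3 : (0 : E3).2.2 = 0 := rfl
lemma e3_ext {x y : E3} (h1 : x.1 = y.1) (h2 : x.2.1 = y.2.1) (h3 : x.2.2 = y.2.2) : x = y := by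
  obtain ⟨a, b, c⟩ := x; obtain ⟨a', b', c'⟩ := y; simp_all
lemma dot3_self_nonneg (x : E3) : 0 ≤ dot3 x x := by
  simp only [dot3]; nlinarith [sq_nonneg x.1, sq_nonneg x.2.1, sq_nonneg x.2.2]
lemma dot3_self_pos {x : E3} (h : x ≠ 0) : 0 < dot3 x x := by
  rcases lt_or_eq_of_le (dot3_self_nonneg x) with h' | h'
  · exact h'
  · exfalso; apply h
    have hd : x.1*x.1 + x.2.1*x.2.1 + x.2.2*x.2.2 = 0 := by
      have := h'.symm; simpa [dot3] using this
    apply e3_ext <;>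
    · simp only [zero_comp1, zero_comp2, zero_comp3]
      nlinarith [sq_nonneg x.1, sq_nonneg x.2.1, sq_nonneg x.2.2]
lemma dot3_self_eq_zero {x : E3} (h : dot3 x x = 0) : x = 0 := by
  by_contra h'; exact absurd h (ne_of_gt (dot3_self_pos h'))
lemma decomp3 (v c a : E3) :
    dot3 (cross3 v c) (cross3 v c) • a
      = dot3 (cross3 a c) (cross3 v c) • v + dot3 (cross3 v a) (cross3 v c) • c
        + dot3 a (cross3 v c) • cross3 v c := by
  apply e3_ext <;>
    simp only [dot3, cross3, add_comp1, add_comp2, add_comp3, smul_comp1, smul_comp2, smul_comp3] <;> ring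
lemma binet (a b c d : E3) :
    dot3 (cross3 a b) (cross3 c d) = dot3 a c * dot3 b d - dot3 a d * dot3 b c := by
  simp only [dot3, cross3]; ring
lemma triple_cycle (a b c : E3) : dot3 a (cross3 b c) = dot3 b (cross3 c a) := by
  simp only [dot3, cross3]; ring
lemma dot3_comm (a b : E3) : dot3 a b = dot3 b a := by simp only [dot3]; ring
lemma dot3_smul_sub (a b : ℝ) (x y z : E3) :
    dot3 (a • x - b • y) z = a * dot3 x z - b * dot3 y z := by
  simp only [dot3, sub_comp1, sub_comp2, sub_comp3, smul_comp1, smul_comp2, smul_comp3]; ring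
lemma dot3_smul_add (a b : ℝ) (x y z : E3) :
    dot3 (a • x + b • y) z = a * dot3 x z + b * dot3 y z := by
  simp only [dot3, add_comp1, add_comp2, add_comp3, smul_comp1, smul_comp2, smul_comp3]; ring
lemma dot3_smul_left (a : ℝ) (x z : E3) : dot3 (a • x) z = a * dot3 x z := by
  simp only [dot3, smul_comp1, smul_comp2, smul_comp3]; ring
lemma dot3_sub_left (x y z : E3) : dot3 (x - y) z = dot3 x z - dot3 y z := by
  simp only [dot3, sub_comp1, sub_comp2, sub_comp3]; ring
lemma dot3_neg_left (x z : E3) : dot3 (-x) z = -dot3 x z := by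
  simp only [dot3, neg_comp1, neg_comp2, neg_comp3]; ring
lemma dot3_zero_right (x : E3) : dot3 x 0 = 0 := by
  simp [dot3, zero_comp1, zero_comp2, zero_comp3]
lemma dot3_zero_left (x : E3) : dot3 0 x = 0 := by
  simp [dot3, zero_comp1, zero_comp2, zero_comp3]
lemma cross3_zero_left (x : E3) : cross3 0 x = 0 := by
  apply e3_ext <;> simp only [cross3, zero_comp1, zero_comp2, zero_comp3] <;> ring
lemma cross3_self (v : E3) : cross3 v v = 0 := by
  apply e3_ext <;> simp only [cross3, zero_comp1, zero_comp2, zero_comp3] <;> ring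
lemma dot3_expand_sub (b v : E3) :
    dot3 (b - v) (b - v) = dot3 b b - 2 * dot3 b v + dot3 v v := by
  simp only [dot3, sub_comp1, sub_comp2, sub_comp3]; ring
lemma dot3_expand_add (b v : E3) :
    dot3 (b + v) (b + v) = dot3 b b + 2 * dot3 b v + dot3 v v := by
  simp only [dot3, add_comp1, add_comp2, add_comp3]; ring

lemma HasDerivAt.c1 {f : ℝ → E3} {f' : E3} {t : ℝ} (hf : HasDerivAt f f' t) :
    HasDerivAt (fun s => (f s).1) f'.1 t := by
  exact (hasFDerivAt_fst (𝕜 := ℝ) (E := ℝ) (F := ℝ × ℝ)).comp_hasDerivAt t hf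
lemma HasDerivAt.c2 {f : ℝ → E3} {f' : E3} {t : ℝ} (hf : HasDerivAt f f' t) :
    HasDerivAt (fun s => (f s).2.1) f'.2.1 t := by
  have h2 : HasDerivAt (fun s => (f s).2) f'.2 t := by
    exact (hasFDerivAt_snd (𝕜 := ℝ) (E := ℝ) (F := ℝ × ℝ)).comp_hasDerivAt t hf
  exact (hasFDerivAt_fst (𝕜 := ℝ) (E := ℝ) (F := ℝ)).comp_hasDerivAt t h2
lemma HasDerivAt.c3 {f : ℝ → E3} {f' : E3} {t : ℝ} (hf : HasDerivAt f f' t) :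
    HasDerivAt (fun s => (f s).2.2) f'.2.2 t := by
  have h2 : HasDerivAt (fun s => (f s).2) f'.2 t := by
    exact (hasFDerivAt_snd (𝕜 := ℝ) (E := ℝ) (F := ℝ × ℝ)).comp_hasDerivAt t hf
  exact (hasFDerivAt_snd (𝕜 := ℝ) (E := ℝ) (F := ℝ)).comp_hasDerivAt t h2
lemma hasDerivAt_dot3 {f g : ℝ → E3} {f' g' : E3} {t : ℝ}
    (hf : HasDerivAt f f' t) (hg : HasDerivAt g g' t) :
    HasDerivAt (fun s => dot3 (f s) (g s)) (dot3 f' (g t) + dot3 (f t) g') t := by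
  have H := ((hf.c1.mul hg.c1).add (hf.c2.mul hg.c2)).add (hf.c3.mul hg.c3)
  simp only [dot3]
  exact H.congr_deriv (by ring)
lemma hasDerivAt_cross3_const {g : ℝ → E3} {g' : E3} {t : ℝ} (c : E3)
    (hg : HasDerivAt g g' t) :
    HasDerivAt (fun s => cross3 (g s) c) (cross3 g' c) t := by
  have h1 := (hg.c2.mul_const c.2.2).sub (hg.c3.mul_const c.2.1)
  have h2 := (hg.c3.mul_const c.1).sub (hg.c1.mul_const c.2.2)
  have h3 := (hg.c1.mul_const c.2.1).sub (hg.c2.mul_const c.1)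
  exact (HasDerivAt.prodMk h1 (HasDerivAt.prodMk h2 h3))

lemma existsW (D : E3 →L[ℝ] E3) (v m : E3) (hv : dot3 v v = 1)
    (hm : m - dot3 m v • v ≠ 0)
    (hperp : ∀ x, dot3 (D x) v = 0)
    (hinj : ∀ x, dot3 x v = 0 → D x = 0 → x = 0) :
    ∃ w, dot3 w v = 0 ∧ dot3 m (cross3 (D w) v) ≠ 0 := by
  by_contra hcon
  push_neg at hcon
  set c : E3 := cross3 v m with hc_def
  have hc : ∀ w, dot3 w v = 0 → dot3 (D w) c = 0 := by
    intro w hw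
    have := hcon w hw
    rwa [triple_cycle m (D w) v] at this
  set u : E3 := m - dot3 m v • v with hu_def
  have hcc : dot3 c c = dot3 u u := by
    have hv' : v.1 * v.1 + v.2.1 * v.2.1 + v.2.2 * v.2.2 = 1 := hv
    simp only [hc_def, hu_def, dot3, cross3, sub_comp1, sub_comp2, sub_comp3,
      smul_comp1, smul_comp2, smul_comp3]
    linear_combination (m.1 * m.1 + m.2.1 * m.2.1 + m.2.2 * m.2.2
      - (m.1 * v.1 + m.2.1 * v.2.1 + m.2.2 * v.2.2) ^ 2) * hv'
  have hccpos : 0 < dot3 c c := hcc ▸ dot3_self_pos hm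
  have hcv : dot3 c v = 0 := by rw [hc_def]; simp only [dot3, cross3]; ring
  set d : E3 := cross3 v c with hd_def
  have hdv : dot3 d v = 0 := by rw [hd_def]; simp only [dot3, cross3]; ring
  have hdc : dot3 d c = 0 := by rw [hd_def]; simp only [dot3, cross3]; ring
  have hdd : dot3 d d = dot3 c c := by
    rw [hd_def, binet, hv, dot3_comm v c, hcv]; ring
  have hddpos : 0 < dot3 d d := hdd ▸ hccpos
  have orth3 : ∀ Z : E3, dot3 Z v = 0 → dot3 Z c = 0 → dot3 Z d = 0 → Z = 0 := by
    intro Z h1 h2 h3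
    have hdec := decomp3 v c Z
    rw [← hd_def] at hdec
    have e1 : dot3 (cross3 Z c) d = 0 := by
      rw [hd_def, binet, h1, h2]; ring
    have e2 : dot3 (cross3 v Z) d = 0 := by
      rw [hd_def, binet, hv, dot3_comm v c, hcv, h2]; ring
    rw [e1, e2, h3] at hdec
    simp only [zero_smul, add_zero, zero_add] at hdec
    rcases smul_eq_zero.mp hdec with h | h
    · exact absurd h (ne_of_gt hddpos)
    · exact h
  set z₁ : E3 := D c with hz1_def
  set z₂ : E3 := D d with hz2_def
  have hz1c : dot3 z₁ c = 0 := hc c hcv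
  have hz2c : dot3 z₂ c = 0 := hc d hdv
  set y : E3 := dot3 z₂ d • c - dot3 z₁ d • d with hy_def
  have hyv : dot3 y v = 0 := by rw [hy_def, dot3_smul_sub, hcv, hdv]; ring
  have hDy : D y = dot3 z₂ d • z₁ - dot3 z₁ d • z₂ := by
    rw [hy_def]; simp [map_sub, map_smul, hz1_def, hz2_def]
  have hZv : dot3 (D y) v = 0 := hperp y
  have hZc : dot3 (D y) c = 0 := hc y hyv
  have hZd : dot3 (D y) d = 0 := by rw [hDy, dot3_smul_sub]; ring
  have hy0 : y = 0 := hinj y hyv (orth3 _ hZv hZc hZd)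
  have hy_c : dot3 y c = 0 := by rw [hy0]; exact dot3_zero_left c
  have hy_d : dot3 y d = 0 := by rw [hy0]; exact dot3_zero_left d
  rw [hy_def, dot3_smul_sub, hdc] at hy_c
  have hz2d : dot3 z₂ d = 0 := by
    rcases mul_eq_zero.mp (by linarith : dot3 z₂ d * dot3 c c = 0) with h' | h'
    · exact h'
    · exact absurd h' (ne_of_gt hccpos)
  rw [hy_def, dot3_smul_sub, dot3_comm c d, hdc] at hy_d
  have hz1d : dot3 z₁ d = 0 := by
    rcases mul_eq_zero.mp (by linarith : dot3 z₁ d * dot3 d d = 0) with h' | h'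
    · exact h'
    · exact absurd h' (ne_of_gt hddpos)
  have hz1v : dot3 z₁ v = 0 := hperp c
  have hz10 : z₁ = 0 := orth3 _ hz1v hz1c hz1d
  have hc0 : c = 0 := hinj c hcv hz10
  rw [hc0] at hccpos
  rw [dot3_zero_left] at hccpos
  exact lt_irrefl 0 hccpos

lemma half_lt_norm (v : E3) (hv : dot3 v v = 1) : 1 / 2 < ‖v‖ := by
  have a1 : |v.1| ≤ ‖v‖ := by
    have := norm_fst_le v; rwa [Real.norm_eq_abs] at this
  have a2 : |v.2.1| ≤ ‖v‖ := by
    have h21 := norm_fst_le v.2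
    have h2 := norm_snd_le v
    rw [Real.norm_eq_abs] at h21
    linarith
  have a3 : |v.2.2| ≤ ‖v‖ := by
    have h22 := norm_snd_le v.2
    have h2 := norm_snd_le v
    rw [Real.norm_eq_abs] at h22
    linarith
  have hv' : v.1 * v.1 + v.2.1 * v.2.1 + v.2.2 * v.2.2 = 1 := hv
  have b1 : v.1 * v.1 ≤ ‖v‖ * ‖v‖ := by
    nlinarith [abs_mul_abs_self v.1, mul_self_le_mul_self (abs_nonneg v.1) a1]
  have b2 : v.2.1 * v.2.1 ≤ ‖v‖ * ‖v‖ := by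
    nlinarith [abs_mul_abs_self v.2.1, mul_self_le_mul_self (abs_nonneg v.2.1) a2]
  have b3 : v.2.2 * v.2.2 ≤ ‖v‖ * ‖v‖ := by
    nlinarith [abs_mul_abs_self v.2.2, mul_self_le_mul_self (abs_nonneg v.2.2) a3]
  nlinarith [norm_nonneg v]

lemma sign_key {X Y A t : ℝ} (hA : A ≠ 0) (htpos : 0 < t)
    (hX : |X - t * A| ≤ |A| / 2 * t) (hY : |Y - (-t) * A| ≤ |A| / 2 * t) :
    (0:ℝ) ∈ Set.uIcc X Y := by
  obtain ⟨hp1, hp2⟩ := abs_le.mp hX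
  obtain ⟨hm1, hm2⟩ := abs_le.mp hY
  rcases lt_or_gt_of_ne hA with hAneg | hApos
  · have hprod : A * t < 0 := mul_neg_of_neg_of_pos hAneg htpos
    rw [abs_of_neg hAneg] at hp1 hp2 hm1 hm2
    apply Set.mem_uIcc.mpr; left
    constructor <;> nlinarith
  · have hprod : 0 < A * t := mul_pos hApos htpos
    rw [abs_of_pos hApos] at hp1 hp2 hm1 hm2
    apply Set.mem_uIcc.mpr; right
    constructor <;> nlinarith

/-- Non-degenerate at `p₀` implies skew: if `d_{p₀}V` restricted to the plane
`ξ_{p₀} = V(p₀)^⊥` has rank 2 (i.e. is injective on that plane), then no line of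
the fibration other than `ℓ_{p₀}` is parallel to `ℓ_{p₀}`. -/
theorem stmt_6 (V : E3 → E3) (hV : ContDiff ℝ (⊤ : ℕ∞) V) (hfib : IsLineFibration V)
    (p₀ : E3)
    (hrank : ∀ u : E3, dot3 u (V p₀) = 0 → fderiv ℝ V p₀ u = 0 → u = 0) :
    ∀ p : E3, (V p = V p₀ ∨ V p = -V p₀) → line V p = line V p₀ := by
  intro p hpar
  by_contra hne
  have hdisj : line V p ∩ line V p₀ = ∅ := (hfib.2 p p₀).resolve_left hne
  set v : E3 := V p₀ with hv_def
  obtain ⟨ε, hε, hVp⟩ : ∃ ε : ℝ, ε * ε = 1 ∧ V p = ε • v := by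
    rcases hpar with h | h
    · exact ⟨1, by norm_num, by simpa using h⟩
    · exact ⟨-1, by norm_num, by rw [h, neg_one_smul]⟩
  have hunit : ∀ x, dot3 (V x) (V x) = 1 := hfib.1
  have hv : dot3 v v = 1 := hunit p₀
  have hVdiff : Differentiable ℝ V := hV.differentiable (by simp)
  set D : E3 →L[ℝ] E3 := fderiv ℝ V p₀ with hD_def
  have hDat : HasFDerivAt V D p₀ := (hVdiff p₀).hasFDerivAt
  -- curve derivatives
  have curveD : ∀ x : E3, HasDerivAt (fun s : ℝ => V (p₀ + s • x)) (D x) 0 := by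
    intro x
    have hc : HasDerivAt (fun s : ℝ => p₀ + s • x) x 0 := by
      simpa using ((hasDerivAt_id (0 : ℝ)).smul_const x).const_add p₀
    have := hDat.comp_hasDerivAt_of_eq 0 hc (by simp)
    exact this
  -- D x ⊥ v
  have hperp : ∀ x, dot3 (D x) v = 0 := by
    intro x
    have h1 := hasDerivAt_dot3 (curveD x) (curveD x)
    simp only [zero_smul, add_zero, ← hv_def] at h1
    have heq : (fun s : ℝ => dot3 (V (p₀ + s • x)) (V (p₀ + s • x))) = fun _ => (1 : ℝ) :=
      funext fun s => hunit _
    rw [heq] at h1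
    have h2 := h1.unique (hasDerivAt_const 0 (1 : ℝ))
    rw [dot3_comm v (D x)] at h2
    linarith
  -- the vector m and its orthogonal part
  set m : E3 := p₀ - p with hm_def
  have hm : m - dot3 m v • v ≠ 0 := by
    intro h0
    have hmval : m = dot3 m v • v := by
      have := sub_eq_zero.mp h0; exact this
    apply Set.eq_empty_iff_forall_notMem.mp hdisj p₀
    constructor
    · refine ⟨ε * dot3 m v, ?_⟩
      rw [hVp, smul_smul]
      have : ε * dot3 m v * ε = dot3 m v := by linear_combination dot3 m v * hε
      rw [this, ← hmval, hm_def]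
      abel
    · exact ⟨0, by simp⟩
  obtain ⟨w, hwv, hA⟩ := existsW D v m hv hm hperp hrank
  set A : ℝ := dot3 m (cross3 (D w) v) with hA_def
  -- w nonzero
  have hw0 : w ≠ 0 := by
    intro h
    apply hA
    rw [hA_def, h, map_zero, cross3_zero_left, dot3_zero_right]
  have hww : 0 < dot3 w w := dot3_self_pos hw0
  -- second basis vector of the plane
  set w' : E3 := cross3 v w with hw'_def
  have hw'v : dot3 w' v = 0 := by rw [hw'_def]; simp only [dot3, cross3]; ring
  have hw'w : dot3 w' w = 0 := by rw [hw'_def]; simp only [dot3, cross3]; ring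
  have hw'w' : dot3 w' w' = dot3 w w := by
    rw [hw'_def, binet, hv, dot3_comm v w, hwv]; ring
  set zfun : ℝ → E3 := fun θ => Real.cos θ • w + Real.sin θ • w' with hzfun_def
  have hz_xi : ∀ θ, dot3 (zfun θ) v = 0 := by
    intro θ
    rw [hzfun_def]
    simp only
    rw [dot3_smul_add, hwv, hw'v]; ring
  have hz_ne : ∀ θ, zfun θ ≠ 0 := by
    intro θ h0
    have d1 : dot3 (zfun θ) w = Real.cos θ * dot3 w w := by
      rw [hzfun_def]; simp only
      rw [dot3_smul_add, hw'w]; ring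
    have d2 : dot3 (zfun θ) w' = Real.sin θ * dot3 w w := by
      rw [hzfun_def]; simp only
      rw [dot3_smul_add, dot3_comm w w', hw'w, hw'w']; ring
    rw [h0, dot3_zero_left] at d1 d2
    have hcos : Real.cos θ = 0 := by
      rcases mul_eq_zero.mp d1.symm with h | h
      · exact h
      · exact absurd h (ne_of_gt hww)
    have hsin : Real.sin θ = 0 := by
      rcases mul_eq_zero.mp d2.symm with h | h
      · exact h
      · exact absurd h (ne_of_gt hww)
    have := sin_sq_add_cos_sq θ
    rw [hcos, hsin] at this; norm_num at this
  have hVc : Continuous V := hV.continuous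
  have hzc : Continuous zfun := by
    rw [hzfun_def]
    exact (Real.continuous_cos.smul continuous_const).add
      (Real.continuous_sin.smul continuous_const)
  -- compactness minimum
  obtain ⟨θ₀, hθ₀mem, hθ₀min⟩ :=
    isCompact_Icc.exists_isMinOn (s := Set.Icc (0:ℝ) π) (Set.nonempty_Icc.mpr pi_pos.le)
      ((D.continuous.comp hzc).norm.continuousOn)
  set cmin : ℝ := ‖D (zfun θ₀)‖ with hcmin_def
  have hcmin_pos : 0 < cmin := by
    rw [hcmin_def, norm_pos_iff]
    intro h
    exact hz_ne θ₀ (hrank _ (hz_xi θ₀) h)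
  have hcmin_le : ∀ θ ∈ Set.Icc (0:ℝ) π, cmin ≤ ‖D (zfun θ)‖ := by
    intro θ hθ
    exact isMinOn_iff.mp hθ₀min θ hθ
  set W : ℝ := ‖w‖ + ‖w'‖ + 1 with hW_def
  have hWpos : 0 < W := by
    rw [hW_def]; positivity
  have hzW : ∀ θ, ‖zfun θ‖ ≤ W := by
    intro θ
    rw [hzfun_def, hW_def]
    simp only
    calc ‖Real.cos θ • w + Real.sin θ • w'‖ ≤ ‖Real.cos θ • w‖ + ‖Real.sin θ • w'‖ :=
          norm_add_le _ _
      _ ≤ ‖w‖ + ‖w'‖ := by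
          rw [norm_smul, norm_smul, Real.norm_eq_abs, Real.norm_eq_abs]
          have := abs_cos_le_one θ
          have := abs_sin_le_one θ
          have := norm_nonneg w
          have := norm_nonneg w'
          nlinarith
      _ ≤ ‖w‖ + ‖w'‖ + 1 := by linarith
  -- littleO of V at p₀
  set ε₀ : ℝ := cmin / (2 * W) with hε₀_def
  have hε₀pos : 0 < ε₀ := by rw [hε₀_def]; positivity
  have hlo := hasFDerivAt_iff_isLittleO_nhds_zero.mp hDat
  obtain ⟨δ₂, hδ₂pos, hδ₂⟩ := Metric.eventually_nhds_iff.mp (hlo.def hε₀pos)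
  -- continuity bound for V near p₀
  obtain ⟨δ₃, hδ₃pos, hδ₃⟩ := Metric.continuousAt_iff.mp (hVc.continuousAt (x := p₀)) 1 one_pos
  -- derivative of the coplanarity function along w
  have hf : HasDerivAt (fun s : ℝ => p₀ + s • w - p) w 0 := by
    simpa using (((hasDerivAt_id (0 : ℝ)).smul_const w).const_add p₀).sub_const p
  have hg : HasDerivAt (fun s : ℝ => cross3 (V (p₀ + s • w)) v) (cross3 (D w) v) 0 :=
    hasDerivAt_cross3_const v (curveD w)
  have hψ : HasDerivAt (fun s : ℝ => dot3 (p₀ + s • w - p) (cross3 (V (p₀ + s • w)) v)) A 0 := by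
    have h := hasDerivAt_dot3 hf hg
    simp only [zero_smul, add_zero, ← hv_def] at h
    rw [cross3_self, dot3_zero_right] at h
    have : p₀ - p = m := hm_def.symm
    rw [this] at h
    simpa [hA_def] using h
  have hψ0 : dot3 (p₀ + (0:ℝ) • w - p) (cross3 (V (p₀ + (0:ℝ) • w)) v) = 0 := by
    simp only [zero_smul, add_zero, ← hv_def]
    rw [cross3_self, dot3_zero_right]
  obtain ⟨δ₁, hδ₁pos, hδ₁⟩ := Metric.eventually_nhds_iff.mp
    ((hasDerivAt_iff_isLittleO.mp hψ).def (by positivity : (0:ℝ) < |A| / 2))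
  -- u and its norm
  set u : E3 := m - dot3 m v • v with hu_def
  have hu_pos : 0 < ‖u‖ := norm_pos_iff.mpr hm
  clear_value A cmin W ε₀ u
  -- choose t
  set t : ℝ := min δ₁ (min δ₂ (min δ₃ ‖u‖)) / (2 * W) with ht_def
  have htpos : 0 < t := by
    rw [ht_def]
    have : 0 < min δ₁ (min δ₂ (min δ₃ ‖u‖)) := by positivity
    positivity
  have htW : t * W = min δ₁ (min δ₂ (min δ₃ ‖u‖)) / 2 := by
    rw [ht_def]; field_simp
  have hWge1 : 1 ≤ W := by
    rw [hW_def]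
    have := norm_nonneg w; have := norm_nonneg w'
    linarith
  have ht_lt_δ₁ : t < δ₁ := by
    have h1 : t ≤ t * W := le_mul_of_one_le_right htpos.le hWge1
    have h2 : t * W ≤ δ₁ / 2 := by
      rw [htW]
      have := min_le_left δ₁ (min δ₂ (min δ₃ ‖u‖))
      linarith
    linarith
  have htW_lt_δ₂ : t * W < δ₂ := by
    rw [htW]
    have h := (min_le_right δ₁ (min δ₂ (min δ₃ ‖u‖))).trans (min_le_left δ₂ (min δ₃ ‖u‖))
    linarith
  have htW_lt_δ₃ : t * W < δ₃ := by
    rw [htW]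
    have h := (min_le_right δ₁ (min δ₂ (min δ₃ ‖u‖))).trans
      ((min_le_right δ₂ (min δ₃ ‖u‖)).trans (min_le_left δ₃ ‖u‖))
    linarith
  have htW_lt_u : t * W < ‖u‖ := by
    rw [htW]
    have h := (min_le_right δ₁ (min δ₂ (min δ₃ ‖u‖))).trans
      ((min_le_right δ₂ (min δ₃ ‖u‖)).trans (min_le_right δ₃ ‖u‖))
    linarith
  -- endpoint estimates
  have hend : ∀ s : ℝ, |s| < δ₁ →
      |dot3 (p₀ + s • w - p) (cross3 (V (p₀ + s • w)) v) - s * A| ≤ |A| / 2 * |s| := by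
    intro s hs
    have h2 := hδ₁ (y := s) (by simpa [Real.dist_eq] using hs)
    rw [hψ0] at h2
    simpa [Real.norm_eq_abs, smul_eq_mul, mul_comm] using h2
  have hAt := abs_pos.mpr hA
  have hpt := hend t (by rw [abs_of_pos htpos]; exact ht_lt_δ₁)
  have hmt := hend (-t) (by rw [abs_neg, abs_of_pos htpos]; exact ht_lt_δ₁)
  rw [abs_of_pos htpos] at hpt
  rw [abs_neg, abs_of_pos htpos] at hmt
  clear_value t
  set Ffun : ℝ → ℝ :=
    fun θ => dot3 (p₀ + t • zfun θ - p) (cross3 (V (p₀ + t • zfun θ)) v) with hF_def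
  have hz0 : zfun 0 = w := by
    rw [hzfun_def]; simp
  have hzπ : zfun π = -w := by
    rw [hzfun_def]; simp
  have hF0 : Ffun 0 = dot3 (p₀ + t • w - p) (cross3 (V (p₀ + t • w)) v) := by
    rw [hF_def]; simp only [hz0]
  have hFπ : Ffun π = dot3 (p₀ + (-t) • w - p) (cross3 (V (p₀ + (-t) • w)) v) := by
    rw [hF_def]; simp only [hzπ, smul_neg, ← neg_smul]
  -- continuity of Ffun
  have hFc : Continuous Ffun := by
    rw [hF_def]
    have hγ : Continuous fun θ : ℝ => p₀ + t • zfun θ :=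
      continuous_const.add (hzc.const_smul t)
    have hG : Continuous fun x : E3 => dot3 (x - p) (cross3 (V x) v) := by
      simp only [dot3, cross3]
      have h1 : Continuous fun x : E3 => (V x).1 := continuous_fst.comp hVc
      have h2 : Continuous fun x : E3 => (V x).2.1 := continuous_fst.comp (continuous_snd.comp hVc)
      have h3 : Continuous fun x : E3 => (V x).2.2 := continuous_snd.comp (continuous_snd.comp hVc)
      fun_prop
    exact hG.comp hγ
  -- opposite signs at 0 and π
  have hpt' : |Ffun 0 - t * A| ≤ |A| / 2 * t := by rw [hF0]; exact hpt
  have hmt' : |Ffun π - (-t) * A| ≤ |A| / 2 * t := by rw [hFπ]; exact hmt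
  clear_value Ffun
  have h0mem : (0:ℝ) ∈ Set.uIcc (Ffun 0) (Ffun π) := sign_key hA htpos hpt' hmt'
  obtain ⟨θs, hθs_mem, hθs⟩ := intermediate_value_uIcc hFc.continuousOn h0mem
  have hθs_Icc : θs ∈ Set.Icc (0:ℝ) π := by
    rwa [Set.uIcc_of_le pi_pos.le] at hθs_mem
  -- the special point
  set hstar : E3 := t • zfun θs with hhstar_def
  set pstar : E3 := p₀ + hstar with hpstar_def
  have hhnorm : ‖hstar‖ ≤ t * W := by
    rw [hhstar_def, norm_smul, Real.norm_eq_abs, abs_of_pos htpos]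
    exact mul_le_mul_of_nonneg_left (hzW θs) htpos.le
  have hhxi : dot3 hstar v = 0 := by
    rw [hhstar_def, dot3_smul_left, hz_xi]; ring
  set b : E3 := V pstar with hb_def
  have hbunit : dot3 b b = 1 := hunit pstar
  have hDh_norm : t * cmin ≤ ‖D hstar‖ := by
    have hDh : D hstar = t • D (zfun θs) := by
      rw [hhstar_def, map_smul]
    rw [hDh, norm_smul, Real.norm_eq_abs, abs_of_pos htpos]
    exact mul_le_mul_of_nonneg_left (hcmin_le θs hθs_Icc) htpos.le
  have hcop : dot3 (pstar - p) (cross3 b v) = 0 := by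
    simp only [hF_def] at hθs
    rw [hb_def, hpstar_def, hhstar_def]
    exact hθs
  have hdist : dist pstar p₀ = ‖hstar‖ := by
    rw [hpstar_def, dist_eq_norm]; simp
  clear_value hstar pstar b
  -- b ≠ v
  have hbv : b ≠ v := by
    intro hbeq
    have happ := hδ₂ (y := hstar) (by
      rw [dist_zero_right]
      exact lt_of_le_of_lt hhnorm htW_lt_δ₂)
    rw [← hpstar_def, ← hb_def, ← hv_def, hbeq] at happ
    rw [sub_self, zero_sub, norm_neg] at happ
    have hbound : ‖D hstar‖ ≤ ε₀ * (t * W) := by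
      calc ‖D hstar‖ ≤ ε₀ * ‖hstar‖ := happ
        _ ≤ ε₀ * (t * W) := mul_le_mul_of_nonneg_left hhnorm hε₀pos.le
    have hval : ε₀ * (t * W) = t * cmin / 2 := by
      rw [hε₀_def]; field_simp
    rw [hval] at hbound
    have := mul_pos htpos hcmin_pos
    linarith
  -- b ≠ -v
  have hbnegv : b ≠ -v := by
    intro hbeq
    have hd := hδ₃ (x := pstar) (by
      rw [hdist]
      exact lt_of_le_of_lt hhnorm htW_lt_δ₃)
    rw [← hb_def, ← hv_def, hbeq] at hd
    have hnv : 1 / 2 < ‖v‖ := half_lt_norm v hv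
    have : dist (-v) v = 2 * ‖v‖ := by
      rw [dist_eq_norm]
      have h2v : -v - v = (-2 : ℝ) • v := by module
      rw [h2v, norm_smul]
      simp [Real.norm_eq_abs]
    rw [this] at hd
    linarith
  -- construct the intersection point
  set n : E3 := cross3 b v with hn_def
  have hnn : dot3 n n ≠ 0 := by
    rw [hn_def, binet, hbunit, hv]
    intro h
    have hsq : dot3 b v * dot3 v b = 1 := by linarith
    rw [dot3_comm v b] at hsq
    rcases mul_self_eq_one_iff.mp hsq with h1 | h1
    · apply hbv
      have : dot3 (b - v) (b - v) = 0 := by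
        rw [dot3_expand_sub, hbunit, hv, h1]; ring
      have := dot3_self_eq_zero this
      exact sub_eq_zero.mp this
    · apply hbnegv
      have : dot3 (b + v) (b + v) = 0 := by
        rw [dot3_expand_add, hbunit, hv, h1]; ring
      have := dot3_self_eq_zero this
      exact eq_neg_of_add_eq_zero_left this
  set a : E3 := p - pstar with ha_def
  have han : dot3 a n = 0 := by
    have h1 : a = -(pstar - p) := by rw [ha_def]; abel
    rw [h1, dot3_neg_left, hcop, neg_zero]
  have hdec := decomp3 b v a
  rw [← hn_def] at hdec
  rw [han, zero_smul, add_zero] at hdec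
  set s : ℝ := dot3 (cross3 a v) n / dot3 n n with hs_def
  set τ : ℝ := dot3 (cross3 b a) n / dot3 n n with hτ_def
  have ha_eq : a = s • b + τ • v := by
    have h1 : (dot3 n n)⁻¹ • (dot3 n n • a) = (dot3 n n)⁻¹ • (dot3 (cross3 a v) n • b + dot3 (cross3 b a) n • v) := by
      rw [hdec]
    rw [inv_smul_smul₀ hnn] at h1
    rw [h1, smul_add, smul_smul, smul_smul, hs_def, hτ_def]
    rw [div_eq_inv_mul, div_eq_inv_mul]
  have hp_eq : p = pstar + s • b + τ • v := by
    have : p - pstar = s • b + τ • v := by rw [← ha_def]; exact ha_eq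
    have := sub_eq_iff_eq_add.mp this
    rw [this]; abel
  clear_value n s τ
  -- x in both lines
  set x : E3 := pstar + s • b with hx_def
  have hx_in_star : x ∈ line V pstar := by
    refine ⟨s, ?_⟩
    rw [hx_def, hb_def]
  have hx_in_p : x ∈ line V p := by
    refine ⟨-(ε * τ), ?_⟩
    rw [hVp, smul_smul]
    have hcoef : -(ε * τ) * ε = -τ := by linear_combination (-τ) * hε
    rw [hcoef, hp_eq, neg_smul]
    abel
  -- pstar not on line V p
  have hpstar_not : pstar ∉ line V p := by
    rintro ⟨τ₀, hτ₀⟩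
    rw [hVp, smul_smul] at hτ₀
    have hmeq : m = (τ₀ * ε) • v - hstar := by
      rw [hm_def]
      have : p₀ = pstar - hstar := by rw [hpstar_def]; abel
      rw [this, hτ₀]
      abel
    have hmv : dot3 m v = τ₀ * ε := by
      rw [hmeq, dot3_sub_left, dot3_smul_left, hv, hhxi]; ring
    have hueq : u = -hstar := by
      rw [hu_def, hmv, hmeq]
      abel
    have : ‖u‖ = ‖hstar‖ := by rw [hueq, norm_neg]
    linarith [lt_of_le_of_lt hhnorm htW_lt_u]
  -- final contradiction
  rcases hfib.2 p pstar with heq | hdis2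
  · apply hpstar_not
    rw [heq]
    exact ⟨0, by simp⟩
  · exact Set.eq_empty_iff_forall_notMem.mp hdis2 x ⟨hx_in_p, hx_in_star⟩
end
end

section
/- Let V : ℝ³ → S² be a smooth unit vector field defining a line fibration such that α = V₁dx + V₂dy + V₃dz is a contact form, and suppose that for every line ℓ of the fibration there exists a distinct parallel line ℓ' in the fibration. Then d_pV has rank exactly 1 at every point p ∈ ℝ³. -/
open Real

noncomputable section

namespace Aux

lemma e3ext (a b : E3) (h1 : a.1 = b.1) (h2 : a.2.1 = b.2.1) (h3 : a.2.2 = b.2.2) : a = b := by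
  obtain ⟨x, y, z⟩ := a; obtain ⟨x', y', z'⟩ := b; simp_all

@[simp] lemma sub_fst (a b : E3) : (a - b).1 = a.1 - b.1 := rfl
@[simp] lemma sub_snd_fst (a b : E3) : (a - b).2.1 = a.2.1 - b.2.1 := rfl
@[simp] lemma sub_snd_snd (a b : E3) : (a - b).2.2 = a.2.2 - b.2.2 := rfl
@[simp] lemma add_fst (a b : E3) : (a + b).1 = a.1 + b.1 := rfl
@[simp] lemma add_snd_fst (a b : E3) : (a + b).2.1 = a.2.1 + b.2.1 := rfl
@[simp] lemma add_snd_snd (a b : E3) : (a + b).2.2 = a.2.2 + b.2.2 := rfl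
@[simp] lemma smul_fst (c : ℝ) (a : E3) : (c • a).1 = c * a.1 := rfl
@[simp] lemma smul_snd_fst (c : ℝ) (a : E3) : (c • a).2.1 = c * a.2.1 := rfl
@[simp] lemma smul_snd_snd (c : ℝ) (a : E3) : (c • a).2.2 = c * a.2.2 := rfl
@[simp] lemma neg_fst (a : E3) : (-a).1 = -a.1 := rfl
@[simp] lemma neg_snd_fst (a : E3) : (-a).2.1 = -a.2.1 := rfl
@[simp] lemma neg_snd_snd (a : E3) : (-a).2.2 = -a.2.2 := rfl
@[simp] lemma zero_fst : (0 : E3).1 = 0 := rfl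
@[simp] lemma zero_snd_fst : (0 : E3).2.1 = 0 := rfl
@[simp] lemma zero_snd_snd : (0 : E3).2.2 = 0 := rfl

lemma dot3_add_left (a b c : E3) : dot3 (a + b) c = dot3 a c + dot3 b c := by
  unfold dot3; simp; ring
lemma dot3_sub_left (a b c : E3) : dot3 (a - b) c = dot3 a c - dot3 b c := by
  unfold dot3; simp; ring
lemma dot3_smul_left (t : ℝ) (a c : E3) : dot3 (t • a) c = t * dot3 a c := by
  unfold dot3; simp; ring
lemma dot3_neg_left (a c : E3) : dot3 (-a) c = - dot3 a c := by
  unfold dot3; simp; ring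
lemma dot3_comm (a b : E3) : dot3 a b = dot3 b a := by unfold dot3; ring
lemma dot3_smul_smul (c : ℝ) (a : E3) : dot3 (c • a) (c • a) = c * c * dot3 a a := by
  unfold dot3; simp; ring

lemma dot3_zero (a : E3) (h : dot3 a a = 0) : a = 0 := by
  unfold dot3 at h
  apply e3ext a 0 <;>
    · show _ = (0:ℝ)
      nlinarith [sq_nonneg a.1, sq_nonneg a.2.1, sq_nonneg a.2.2]

lemma dot3_nonneg (a : E3) : 0 ≤ dot3 a a := by
  unfold dot3; nlinarith [sq_nonneg a.1, sq_nonneg a.2.1, sq_nonneg a.2.2]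

lemma cs3 (a b : E3) : (dot3 a b)^2 ≤ dot3 a a * dot3 b b := by
  unfold dot3
  nlinarith [sq_nonneg (a.1*b.2.1 - a.2.1*b.1), sq_nonneg (a.1*b.2.2 - a.2.2*b.1),
    sq_nonneg (a.2.1*b.2.2 - a.2.2*b.2.1)]

lemma unit_eq (a b : E3) (ha : dot3 a a = 1) (hb : dot3 b b = 1) (hab : dot3 a b = 1) :
    a = b := by
  have h : dot3 (a - b) (a - b) = 0 := by
    unfold dot3 at *; simp only [sub_fst, sub_snd_fst, sub_snd_snd]; nlinarith
  exact sub_eq_zero.mp (dot3_zero _ h)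

lemma N2_smul2 (a b : ℝ) (X Y : E3) :
    dot3 (a • X + b • Y) (a • X + b • Y)
      = a^2 * dot3 X X + 2*a*b*dot3 X Y + b^2 * dot3 Y Y := by
  unfold dot3; simp; ring

lemma quad_lower (a b : ℝ) (X Y : E3) :
    (dot3 X X * dot3 Y Y - (dot3 X Y)^2) * (a^2 + b^2)
      ≤ dot3 (a • X + b • Y) (a • X + b • Y) * (dot3 X X + dot3 Y Y) := by
  rw [N2_smul2]
  nlinarith [sq_nonneg (a * dot3 X X + b * dot3 X Y), sq_nonneg (a * dot3 X Y + b * dot3 Y Y)]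

lemma N2_add_le (x y : E3) : dot3 (x + y) (x + y) ≤ 2 * dot3 x x + 2 * dot3 y y := by
  unfold dot3; simp
  nlinarith [sq_nonneg (x.1 - y.1), sq_nonneg (x.2.1 - y.2.1), sq_nonneg (x.2.2 - y.2.2)]

lemma gram_eq (X Y : E3) (h : dot3 X X * dot3 Y Y - (dot3 X Y)^2 = 0) :
    dot3 X X • Y = dot3 X Y • X := by
  have key : dot3 (dot3 X X • Y - dot3 X Y • X) (dot3 X X • Y - dot3 X Y • X)
      = dot3 X X * (dot3 X X * dot3 Y Y - (dot3 X Y)^2) := by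
    unfold dot3; simp; ring
  rw [h, mul_zero] at key
  exact sub_eq_zero.mp (dot3_zero _ key)

/-- expansion in an orthonormal frame `n, u, cross3 n u`. -/
lemma expand (n u : E3) (h1 : dot3 n n = 1) (h2 : dot3 u u = 1) (h3 : dot3 n u = 0)
    (a : E3) :
    a = dot3 a n • n + dot3 a u • u + dot3 a (cross3 n u) • cross3 n u := by
  unfold dot3 cross3 at *
  obtain ⟨n1, n2, n3⟩ := n; obtain ⟨u1, u2, u3⟩ := u; obtain ⟨a1, a2, a3⟩ := a
  simp only [] at *
  apply e3ext <;> simp only [Prod.smul_fst, Prod.smul_snd, Prod.fst_add, Prod.snd_add,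
    smul_eq_mul]
  · linear_combination (-(a1 * (u1*u1+u2*u2+u3*u3)) + u1 * (a1*u1+a2*u2+a3*u3)) * h1 +
      (-(a1) + n1 * (a1*n1+a2*n2+a3*n3)) * h2 +
      ((n1*u1+n2*u2+n3*u3) * a1 - n1 * (a1*u1+a2*u2+a3*u3) - u1 * (a1*n1+a2*n2+a3*n3)) * h3
  · linear_combination (-(a2 * (u1*u1+u2*u2+u3*u3)) + u2 * (a1*u1+a2*u2+a3*u3)) * h1 +
      (-(a2) + n2 * (a1*n1+a2*n2+a3*n3)) * h2 +
      ((n1*u1+n2*u2+n3*u3) * a2 - n2 * (a1*u1+a2*u2+a3*u3) - u2 * (a1*n1+a2*n2+a3*n3)) * h3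
  · linear_combination (-(a3 * (u1*u1+u2*u2+u3*u3)) + u3 * (a1*u1+a2*u2+a3*u3)) * h1 +
      (-(a3) + n3 * (a1*n1+a2*n2+a3*n3)) * h2 +
      ((n1*u1+n2*u2+n3*u3) * a3 - n3 * (a1*u1+a2*u2+a3*u3) - u3 * (a1*n1+a2*n2+a3*n3)) * h3

lemma lagrange (n u : E3) (h1 : dot3 n n = 1) (h2 : dot3 u u = 1) (h3 : dot3 n u = 0) :
    dot3 (cross3 n u) (cross3 n u) = 1 := by
  unfold dot3 cross3 at *
  obtain ⟨n1, n2, n3⟩ := n; obtain ⟨u1, u2, u3⟩ := u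
  simp only [] at *
  linear_combination (u1*u1+u2*u2+u3*u3) * h1 + h2 - (n1*u1+n2*u2+n3*u3) * h3

lemma cross_perp_left (n u : E3) : dot3 n (cross3 n u) = 0 := by
  unfold dot3 cross3; simp; ring

lemma cross_perp_right (n u : E3) : dot3 u (cross3 n u) = 0 := by
  unfold dot3 cross3; simp; ring

lemma cont_dot3 {f g : ℝ → E3} (hf : Continuous f) (hg : Continuous g) :
    Continuous fun t => dot3 (f t) (g t) := by
  unfold dot3
  exact ((hf.fst.mul hg.fst).add ((hf.snd.fst).mul (hg.snd.fst))).add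
    ((hf.snd.snd).mul (hg.snd.snd))

lemma comp_bounds (z : E3) : |z.1| ≤ ‖z‖ ∧ |z.2.1| ≤ ‖z‖ ∧ |z.2.2| ≤ ‖z‖ := by
  refine ⟨?_, ?_, ?_⟩
  · simpa [Real.norm_eq_abs] using norm_fst_le z
  · simpa [Real.norm_eq_abs] using (norm_fst_le z.2).trans (norm_snd_le z)
  · simpa [Real.norm_eq_abs] using (norm_snd_le z.2).trans (norm_snd_le z)

lemma dot3_le_norm (z : E3) : dot3 z z ≤ 3 * ‖z‖^2 := by
  obtain ⟨h1, h2, h3⟩ := comp_bounds z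
  unfold dot3
  nlinarith [norm_nonneg z, abs_nonneg z.1, abs_nonneg z.2.1, abs_nonneg z.2.2,
    sq_abs z.1, sq_abs z.2.1, sq_abs z.2.2]

lemma norm_le_of_comps (z : E3) (c : ℝ) (h1 : |z.1| ≤ c) (h2 : |z.2.1| ≤ c)
    (h3 : |z.2.2| ≤ c) : ‖z‖ ≤ c := by
  rw [Prod.norm_def]
  apply max_le
  · simpa [Real.norm_eq_abs] using h1
  · rw [Prod.norm_def]
    apply max_le <;> simpa [Real.norm_eq_abs]

lemma lineConst (V : E3 → E3) (hV : Continuous V)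
    (hunit : ∀ p, dot3 (V p) (V p) = 1)
    (hlines : ∀ p q, line V p = line V q ∨ line V p ∩ line V q = ∅) :
    ∀ (x : E3) (s : ℝ), V (x + s • V x) = V x := by
  intro x s₀
  have hpm : ∀ s : ℝ, dot3 (V (x + s • V x)) (V x) = 1 ∨ dot3 (V (x + s • V x)) (V x) = -1 := by
    intro s
    set y := x + s • V x with hy
    have hyx : y ∈ line V x := ⟨s, rfl⟩
    have hyy : y ∈ line V y := ⟨0, by simp⟩
    have heq : line V x = line V y := by
      rcases hlines x y with h | h
      · exact h
      · exact absurd (Set.mem_inter hyx hyy) (by simp [h])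
    have h1 : y + (1:ℝ) • V y ∈ line V x := heq ▸ ⟨1, rfl⟩
    obtain ⟨t₁, ht⟩ := h1
    have hVy : V y = (t₁ - s) • V x := by
      have : x + s • V x + V y = x + t₁ • V x := by
        simpa [hy] using ht
      have h2 : V y = (t₁ - s) • V x := by
        have := this
        rw [sub_smul]
        abel_nf
        abel_nf at this
        linear_combination (norm := module) this
      exact h2
    have hkey : ∀ c : ℝ, dot3 (c • V x) (c • V x) = c * c * dot3 (V x) (V x) := by
      intro c; unfold dot3; simp only [smul_fst, smul_snd_fst, smul_snd_snd]; ring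
    have hkey2 : ∀ c : ℝ, dot3 (c • V x) (V x) = c * dot3 (V x) (V x) := by
      intro c; unfold dot3; simp only [smul_fst, smul_snd_fst, smul_snd_snd]; ring
    have hsq : (t₁ - s) * (t₁ - s) = 1 := by
      have h3 := hunit y
      rw [hVy, hkey, hunit x, mul_one] at h3
      exact h3
    have hdot : dot3 (V y) (V x) = (t₁ - s) := by
      rw [hVy, hkey2, hunit x, mul_one]
    rcases mul_self_eq_one_iff.mp hsq with h | h
    · left; rw [hdot, h]
    · right; rw [hdot, h]
  have hc0 : Continuous fun s : ℝ => x + s • V x :=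
    continuous_const.add (continuous_id.smul continuous_const)
  have hW : Continuous fun s : ℝ => V (x + s • V x) := hV.comp hc0
  set g : ℝ → ℝ := fun s => dot3 (V (x + s • V x)) (V x) with hgdef
  have hg : Continuous g := by
    apply Continuous.add
    apply Continuous.add
    · exact (hW.fst).mul continuous_const
    · exact ((hW.snd).fst).mul continuous_const
    · exact ((hW.snd).snd).mul continuous_const
  have hg0 : g 0 = 1 := by
    have : x + (0:ℝ) • V x = x := by simp
    simp only [hgdef, this, hunit x]
  have hgs : g s₀ = 1 := by
    by_contra hne
    have hm1 : g s₀ = -1 := (hpm s₀).resolve_left hne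
    have h0 : (0:ℝ) ∈ Set.uIcc (g 0) (g s₀) := by
      rw [hg0, hm1]; simp [Set.mem_uIcc]
    have := intermediate_value_uIcc (a := (0:ℝ)) (b := s₀) hg.continuousOn h0
    obtain ⟨c, _, hc⟩ := this
    have hgc : dot3 (V (x + c • V x)) (V x) = 0 := hc
    rcases hpm c with h | h <;> rw [h] at hgc <;> norm_num at hgc
  exact unit_eq _ _ (hunit _) (hunit x) hgs

lemma eq_of_mem_line (V : E3 → E3) (hV : Continuous V)
    (hunit : ∀ p, dot3 (V p) (V p) = 1)
    (hlines : ∀ p q, line V p = line V q ∨ line V p ∩ line V q = ∅) :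
    ∀ r y, y ∈ line V r → V y = V r := by
  rintro r y ⟨t, rfl⟩
  exact lineConst V hV hunit hlines r t


variable (V : E3 → E3) (hV : ContDiff ℝ (⊤ : ℕ∞) V)
  (hline : ∀ (x : E3) (s : ℝ), V (x + s • V x) = V x)

include hV hline in
/-- differentiating `V (p + t • V p) = V p` in `t`. -/
lemma fderiv_self (p : E3) : fderiv ℝ V p (V p) = 0 := by
  have hd : Differentiable ℝ V := hV.differentiable (by simp)
  have hc : HasDerivAt (fun t : ℝ => p + t • V p) (V p) 0 := by
    simpa using ((hasDerivAt_id (0:ℝ)).smul_const (V p)).const_add p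
  have h1 : HasDerivAt (fun t : ℝ => V (p + t • V p)) (fderiv ℝ V p (V p)) 0 := by
    have := ((hd (p + (0:ℝ) • V p)).hasFDerivAt).comp_hasDerivAt 0 hc
    simpa [Function.comp_def] using this
  have h2 : (fun t : ℝ => V (p + t • V p)) = fun _ => V p := funext fun t => hline p t
  rw [h2] at h1
  have h3 : HasDerivAt (fun _ : ℝ => V p) (0 : E3) 0 := hasDerivAt_const _ _
  exact h1.unique h3

include hV hline in
/-- `I + t dV_p` is injective. -/
lemma inj_aux (p : E3) (v : E3) (t : ℝ) (h : v + t • fderiv ℝ V p v = 0) : v = 0 := by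
  have hd : Differentiable ℝ V := hV.differentiable (by simp)
  set L := fderiv ℝ V p with hL
  have hg : HasFDerivAt (fun x => x + t • V x)
      (ContinuousLinearMap.id ℝ E3 + t • L) p :=
    (hasFDerivAt_id p).add ((hd p).hasFDerivAt.const_smul t)
  have hcomp : HasFDerivAt (fun x => V (x + t • V x))
      ((fderiv ℝ V (p + t • V p)).comp (ContinuousLinearMap.id ℝ E3 + t • L)) p :=
    ((hd (p + t • V p)).hasFDerivAt).comp p hg
  have heq : (fun x => V (x + t • V x)) = V := funext fun x => hline x t
  rw [heq] at hcomp
  have huniq := hcomp.unique (hd p).hasFDerivAt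
  have happ := congrArg (fun (M : E3 →L[ℝ] E3) => M v) huniq
  simp only [ContinuousLinearMap.comp_apply, ContinuousLinearMap.add_apply,
    ContinuousLinearMap.id_apply, ContinuousLinearMap.smul_apply, ← hL] at happ
  rw [h] at happ
  have : L v = 0 := by simpa using happ.symm
  have hv : v = -(t • L v) := by
    have := h; rwa [add_eq_zero_iff_eq_neg] at this
  rw [this] at hv; simpa using hv

include hV in
/-- range of `dV_p` is orthogonal to `V p`. -/
lemma range_perp (hunit : ∀ p, dot3 (V p) (V p) = 1) (p v : E3) :
    dot3 (fderiv ℝ V p v) (V p) = 0 := by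
  have hd : Differentiable ℝ V := hV.differentiable (by simp)
  have hc : HasDerivAt (fun t : ℝ => p + t • v) v 0 := by
    simpa using ((hasDerivAt_id (0:ℝ)).smul_const v).const_add p
  have hF : HasDerivAt (fun t : ℝ => V (p + t • v)) (fderiv ℝ V p v) 0 := by
    have := ((hd (p + (0:ℝ) • v)).hasFDerivAt).comp_hasDerivAt 0 hc
    simpa [Function.comp_def] using this
  set F := fun t : ℝ => V (p + t • v) with hFdef
  set L := fderiv ℝ V p v with hLdef
  have h1 : HasDerivAt (fun t => (F t).1) L.1 0 := hF.fst
  have h21 : HasDerivAt (fun t => (F t).2.1) L.2.1 0 := hF.snd.fst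
  have h22 : HasDerivAt (fun t => (F t).2.2) L.2.2 0 := hF.snd.snd
  have hpsi : HasDerivAt (fun t => (F t).1 * (F t).1 + (F t).2.1 * (F t).2.1
      + (F t).2.2 * (F t).2.2)
      (L.1 * (F 0).1 + (F 0).1 * L.1 + (L.2.1 * (F 0).2.1 + (F 0).2.1 * L.2.1)
        + (L.2.2 * (F 0).2.2 + (F 0).2.2 * L.2.2)) 0 :=
    ((h1.mul h1).add (h21.mul h21)).add (h22.mul h22)
  have hconst : (fun t => (F t).1 * (F t).1 + (F t).2.1 * (F t).2.1 + (F t).2.2 * (F t).2.2)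
      = fun _ => (1:ℝ) := by
    funext t
    have := hunit (p + t • v)
    unfold dot3 at this
    simpa [hFdef] using this
  rw [hconst] at hpsi
  have h0 := hpsi.unique (hasDerivAt_const _ _)
  have hF0 : F 0 = V p := by simp [hFdef]
  rw [hF0] at h0
  unfold dot3
  linarith [h0]

lemma detD (V : E3 → E3) (hVc : Continuous V)
    (hunit : ∀ p, dot3 (V p) (V p) = 1)
    (hlines : ∀ p q, line V p = line V q ∨ line V p ∩ line V q = ∅)
    (n u : E3) (hn : dot3 n n = 1) (hu : dot3 u u = 1) (hnu : dot3 n u = 0)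
    (r x : E3) (hr : V r = n ∨ V r = -n) (hx1 : V x ≠ n) (hx2 : V x ≠ -n) :
    dot3 (V x) u * dot3 (r - x) (cross3 n u)
      - dot3 (V x) (cross3 n u) * dot3 (r - x) u ≠ 0 := by
  intro h0
  set w := cross3 n u with hwdef
  set A := dot3 (V x) u with hA
  set B := dot3 (V x) w with hB
  set C := dot3 (r - x) u with hC
  set E := dot3 (r - x) w with hE
  -- (A, B) ≠ (0, 0)
  have hAB : ¬ (A = 0 ∧ B = 0) := by
    rintro ⟨hA0, hB0⟩
    have hexp := Aux.expand n u hn hu hnu (V x)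
    rw [← hwdef, ← hA, ← hB, hA0, hB0] at hexp
    simp only [zero_smul, add_zero] at hexp
    have hk : (dot3 (V x) n) * (dot3 (V x) n) = 1 := by
      have h1 := hunit x
      rw [hexp] at h1
      rw [Aux.dot3_smul_smul, hn] at h1
      linarith [h1]
    rcases mul_self_eq_one_iff.mp hk with h | h
    · exact hx1 (by rw [hexp, h, one_smul])
    · exact hx2 (by rw [hexp, h]; module)
  -- find λ with C = λ A, E = λ B
  obtain ⟨lam, hCl, hEl⟩ : ∃ lam : ℝ, C = lam * A ∧ E = lam * B := by
    by_cases hA0 : A = 0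
    · have hB0 : B ≠ 0 := fun hb => hAB ⟨hA0, hb⟩
      refine ⟨E / B, ?_, by field_simp⟩
      have hBC : B * C = 0 := by rw [hA0] at h0; linarith
      rcases mul_eq_zero.mp hBC with h | h
      · exact absurd h hB0
      · rw [h, hA0, mul_zero]
    · refine ⟨C / A, by field_simp, ?_⟩
      rw [div_mul_eq_mul_div, eq_div_iff hA0]
      linear_combination h0
  -- the point y on both lines
  set y := x + lam • V x with hy
  have hyu : dot3 (y - r) u = 0 := by
    have : y - r = lam • V x - (r - x) := by rw [hy]; module
    rw [this, Aux.dot3_sub_left, Aux.dot3_smul_left, ← hA, ← hC, hCl]; ring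
  have hyw : dot3 (y - r) w = 0 := by
    have : y - r = lam • V x - (r - x) := by rw [hy]; module
    rw [this, Aux.dot3_sub_left, Aux.dot3_smul_left, ← hB, ← hE, hEl]; ring
  have hyr : y - r = dot3 (y - r) n • n := by
    have hexp := Aux.expand n u hn hu hnu (y - r)
    rw [← hwdef, hyu, hyw] at hexp
    simpa using hexp
  have hyliner : y ∈ line V r := by
    rcases hr with h | h
    · exact ⟨dot3 (y - r) n, by rw [h, ← hyr]; abel⟩
    · refine ⟨-(dot3 (y - r) n), ?_⟩
      rw [h]
      have : -(dot3 (y - r) n) • -n = dot3 (y - r) n • n := by module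
      rw [this, ← hyr]; abel
  have hylinex : y ∈ line V x := ⟨lam, rfl⟩
  have heq : line V x = line V r := by
    rcases hlines x r with h | h
    · exact h
    · exact absurd (Set.mem_inter hylinex hyliner) (by simp [h])
  have hxr : V x = V r := by
    have hx_mem : x ∈ line V r := heq ▸ ⟨0, by simp⟩
    exact eq_of_mem_line V hVc hunit hlines r x hx_mem
  rcases hr with h | h
  · exact hx1 (hxr.trans h)
  · exact hx2 (hxr.trans h)

lemma abs_le_one_of_unit (u : E3) (hu : dot3 u u = 1) :
    |u.1| ≤ 1 ∧ |u.2.1| ≤ 1 ∧ |u.2.2| ≤ 1 := by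
  unfold dot3 at hu
  refine ⟨abs_le.mpr ⟨by nlinarith [sq_nonneg u.2.1, sq_nonneg u.2.2], by
      nlinarith [sq_nonneg u.2.1, sq_nonneg u.2.2]⟩,
    abs_le.mpr ⟨by nlinarith [sq_nonneg u.1, sq_nonneg u.2.2], by
      nlinarith [sq_nonneg u.1, sq_nonneg u.2.2]⟩,
    abs_le.mpr ⟨by nlinarith [sq_nonneg u.1, sq_nonneg u.2.1], by
      nlinarith [sq_nonneg u.1, sq_nonneg u.2.1]⟩⟩

lemma comp_abs_bound (e a b c d : ℝ) (he : 0 ≤ e) (ha : |a| ≤ 1) (hb : |b| ≤ 1)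
    (hc : |c| ≤ 1) (hd : |d| ≤ 1) : |e * a * b + e * c * d| ≤ 2 * e := by
  have hab : |a| * |b| ≤ 1 := by nlinarith [abs_nonneg a, abs_nonneg b]
  have hcd : |c| * |d| ≤ 1 := by nlinarith [abs_nonneg c, abs_nonneg d]
  have h1 : |e * a * b| ≤ e := by
    rw [abs_mul, abs_mul, abs_of_nonneg he]
    nlinarith [hab]
  have h2 : |e * c * d| ≤ e := by
    rw [abs_mul, abs_mul, abs_of_nonneg he]
    nlinarith [hcd]
  calc |e * a * b + e * c * d| ≤ |e * a * b| + |e * c * d| := abs_add_le _ _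
    _ ≤ 2 * e := by linarith

set_option maxHeartbeats 2000000 in
lemma rank_ne_two (V : E3 → E3) (hV : ContDiff ℝ (⊤ : ℕ∞) V) (hfib : IsLineFibration V)
    (p q : E3) (hq1 : line V q ≠ line V p) (hq2 : V q = V p ∨ V q = -V p)
    (hrank : Module.finrank ℝ (LinearMap.range (fderiv ℝ V p).toLinearMap) = 2) :
    False := by
  obtain ⟨hunit, hlines⟩ := hfib
  have hVc : Continuous V := hV.continuous
  have hd : Differentiable ℝ V := hV.differentiable (by simp)
  have hline := lineConst V hVc hunit hlines
  set n := V p with hn_def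
  clear_value n
  have hn : dot3 n n = 1 := by rw [hn_def]; exact hunit p
  have hn0 : n ≠ 0 := fun h => by rw [h] at hn; unfold dot3 at hn; simp at hn
  set L := fderiv ℝ V p with hL
  clear_value L
  have hLn : L n = 0 := by rw [hL, hn_def]; exact fderiv_self V hV hline p
  -- kernel is exactly the span of n
  have hker : ∀ v : E3, L v = 0 → ∃ t : ℝ, v = t • n := by
    have hfin : Module.finrank ℝ E3 = 3 := by
      rw [Module.finrank_prod, Module.finrank_prod, Module.finrank_self]
    have hsum := LinearMap.finrank_range_add_finrank_ker L.toLinearMap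
    rw [hfin, hrank] at hsum
    have hkerdim : Module.finrank ℝ (LinearMap.ker L.toLinearMap) = 1 := by omega
    have hnker : n ∈ LinearMap.ker L.toLinearMap := by
      simpa [LinearMap.mem_ker] using hLn
    have hle : Submodule.span ℝ {n} ≤ LinearMap.ker L.toLinearMap := by
      rw [Submodule.span_le, Set.singleton_subset_iff]; exact hnker
    have hspan : Module.finrank ℝ (Submodule.span ℝ {n}) = 1 := finrank_span_singleton hn0
    have heq : Submodule.span ℝ {n} = LinearMap.ker L.toLinearMap :=
      Submodule.eq_of_le_of_finrank_le hle (by rw [hspan, hkerdim])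
    intro v hv
    have hv' : v ∈ Submodule.span ℝ ({n} : Set E3) := by
      rw [heq]; simpa [LinearMap.mem_ker] using hv
    obtain ⟨t, ht⟩ := Submodule.mem_span_singleton.mp hv'
    exact ⟨t, ht.symm⟩
  -- q is not on the line through p
  have hqlinep : q ∉ line V p := by
    intro hmem
    apply hq1
    rcases hlines q p with h | h
    · exact h
    · exact absurd (Set.mem_inter (show q ∈ line V q from ⟨0, by simp⟩) hmem) (by simp [h])
  -- the orthonormal frame n, u, w
  set v0 : E3 := (q - p) - dot3 (q - p) n • n with hv0_def
  clear_value v0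
  have hv0n : dot3 v0 n = 0 := by
    rw [hv0_def, dot3_sub_left, dot3_smul_left, hn]; ring
  have hv00 : v0 ≠ 0 := by
    intro h
    apply hqlinep
    refine ⟨dot3 (q - p) n, ?_⟩
    rw [hv0_def] at h
    rw [← hn_def]
    linear_combination (norm := module) h
  have hv0pos : 0 < dot3 v0 v0 :=
    lt_of_le_of_ne (dot3_nonneg v0) (fun h => hv00 (dot3_zero v0 h.symm))
  set s : ℝ := Real.sqrt (dot3 v0 v0) with hs_def
  clear_value s
  have hs : 0 < s := by rw [hs_def]; exact Real.sqrt_pos.mpr hv0pos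
  have hs2 : s * s = dot3 v0 v0 := by rw [hs_def]; exact Real.mul_self_sqrt hv0pos.le
  set u : E3 := s⁻¹ • v0 with hu_def
  clear_value u
  have hu : dot3 u u = 1 := by
    rw [hu_def, dot3_smul_smul, ← hs2]
    field_simp
  have hnu : dot3 n u = 0 := by
    rw [hu_def, dot3_comm, dot3_smul_left, hv0n, mul_zero]
  set w : E3 := cross3 n u with hw_def
  clear_value w
  have hw : dot3 w w = 1 := by rw [hw_def]; exact lagrange n u hn hu hnu
  have hnw : dot3 n w = 0 := by rw [hw_def]; exact cross_perp_left n u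
  have huw : dot3 u w = 0 := by rw [hw_def]; exact cross_perp_right n u
  have hwu : dot3 w u = 0 := by rw [dot3_comm]; exact huw
  have hwn : dot3 w n = 0 := by rw [dot3_comm]; exact hnw
  have hun : dot3 u n = 0 := by rw [dot3_comm]; exact hnu
  have hv0u : s • u = v0 := by
    rw [hu_def, smul_smul, mul_inv_cancel₀ hs.ne', one_smul]
  have hv0u' : dot3 v0 u = s := by
    rw [← hv0u, dot3_smul_left, hu, mul_one]
  have hv0w : dot3 v0 w = 0 := by
    rw [← hv0u, dot3_smul_left, huw, mul_zero]
  have hqpu : dot3 (q - p) u = s := by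
    have hdec : q - p = v0 + dot3 (q - p) n • n := by rw [hv0_def]; module
    rw [hdec, dot3_add_left, dot3_smul_left, hv0u', hnu]; ring
  have hqpw : dot3 (q - p) w = 0 := by
    have hdec : q - p = v0 + dot3 (q - p) n • n := by rw [hv0_def]; module
    rw [hdec, dot3_add_left, dot3_smul_left, hv0w, hnw]; ring
  -- the partial derivatives
  set X : E3 := L u with hX_def
  clear_value X
  set Y : E3 := L w with hY_def
  clear_value Y
  have hXn : dot3 X n = 0 := by
    rw [hX_def, hL, hn_def]; exact range_perp V hV hunit p u
  have hX0 : X ≠ 0 := by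
    intro h
    rw [hX_def] at h
    obtain ⟨t, ht⟩ := hker u h
    have ht0 : t = 0 := by
      have := hnu
      rw [ht, dot3_comm, dot3_smul_left, hn, mul_one] at this
      exact this
    rw [ht0, zero_smul] at ht
    rw [ht] at hu
    unfold dot3 at hu; simp at hu
  have hXXpos : 0 < dot3 X X :=
    lt_of_le_of_ne (dot3_nonneg X) (fun h => hX0 (dot3_zero X h.symm))
  set G : ℝ := dot3 X X * dot3 Y Y - (dot3 X Y)^2 with hG_def
  clear_value G
  have hG0 : 0 ≤ G := by have := cs3 X Y; rw [hG_def]; linarith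
  have hGpos : 0 < G := by
    rcases lt_or_eq_of_le hG0 with h | h
    · exact h
    · exfalso
      have hgram := gram_eq X Y (by rw [hG_def] at h; linarith)
      have hLzero : L (dot3 X X • w - dot3 X Y • u) = 0 := by
        rw [map_sub, map_smul, map_smul, ← hX_def, ← hY_def, hgram]
        simp
      obtain ⟨t, ht⟩ := hker _ hLzero
      have happ := congrArg (fun ζ => dot3 ζ w) ht
      rw [dot3_sub_left, dot3_smul_left, dot3_smul_left, dot3_smul_left, hw, huw,
        hnw] at happ
      have : dot3 X X = 0 := by linarith [happ]
      exact hXXpos.ne' this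
  set γ : ℝ := dot3 X w with hγ_def
  clear_value γ
  have hγ : γ ≠ 0 := by
    intro h
    have hexp := expand n u hn hu hnu X
    rw [← hw_def, hXn, ← hγ_def, h] at hexp
    simp only [zero_smul, add_zero, zero_add] at hexp
    set α := dot3 X u with hα_def
    by_cases hα : α = 0
    · rw [hα, zero_smul] at hexp
      exact hX0 hexp
    · have hzero : u + (-(α⁻¹)) • L u = 0 := by
        rw [← hX_def, hexp, smul_smul]
        have : -α⁻¹ * α = -1 := by field_simp
        rw [this]
        module
      rw [hL] at hzero
      have := inj_aux V hV hline p u (-(α⁻¹)) hzero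
      rw [this] at hu
      unfold dot3 at hu; simp at hu
  set S : ℝ := dot3 X X + dot3 Y Y with hS_def
  clear_value S
  have hS : 0 < S := by have := dot3_nonneg Y; rw [hS_def]; linarith
  set m : ℝ := min (G / S) (γ^2) with hm_def
  clear_value m
  have hm : 0 < m := by
    rw [hm_def]; exact lt_min (div_pos hGpos hS) (sq_pos_of_ne_zero hγ)
  set c' : ℝ := Real.sqrt (m / 13) with hc'_def
  clear_value c'
  have hc' : 0 < c' := by rw [hc'_def]; exact Real.sqrt_pos.mpr (by positivity)
  have hc'2 : c' ^ 2 = m / 13 := by rw [hc'_def]; exact Real.sq_sqrt (by positivity)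
  -- little-o data
  have hFD := (hd p).hasFDerivAt
  rw [hasFDerivAt_iff_isLittleO_nhds_zero] at hFD
  have hev := Asymptotics.isLittleO_iff.mp hFD hc'
  rw [Metric.eventually_nhds_iff] at hev
  obtain ⟨δ, hδ, hbound⟩ := hev
  -- the radius
  set K : ℝ := 4 * S + 24 * c'^2 with hK_def
  clear_value K
  have hK : 0 < K := by have h := sq_nonneg c'; rw [hK_def]; linarith
  set ε : ℝ := min (s / 2) (min (δ / 3) (1 / (1 + K))) with hε_def
  clear_value ε
  have hε : 0 < ε := by
    rw [hε_def]; exact lt_min (by linarith) (lt_min (by linarith) (by positivity))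
  have hεs : ε < s := by
    rw [hε_def]; exact lt_of_le_of_lt (min_le_left _ _) (by linarith)
  have hεδ : 2 * ε < δ := by
    have h1 : ε ≤ δ / 3 := by rw [hε_def]; exact le_trans (min_le_right _ _) (min_le_left _ _)
    linarith
  have hεK : ε ≤ 1 / (1 + K) := by
    rw [hε_def]; exact le_trans (min_le_right _ _) (min_le_right _ _)
  -- the circle
  set F : ℝ → E3 := fun θ => p + (ε * Real.cos θ) • u + (ε * Real.sin θ) • w with hF_def
  clear_value F
  have hFsub : ∀ θ, F θ - p = (ε * Real.cos θ) • u + (ε * Real.sin θ) • w := by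
    intro θ; simp only [hF_def]; module
  set z : ℝ → E3 := fun θ => V (F θ) - V p - L (F θ - p) with hz_def
  clear_value z
  have hVF : ∀ θ, V (F θ) = n + ((ε * Real.cos θ) • X + (ε * Real.sin θ) • Y) + z θ := by
    intro θ
    have hLF : L (F θ - p) = (ε * Real.cos θ) • X + (ε * Real.sin θ) • Y := by
      rw [hFsub θ, map_add, map_smul, map_smul, ← hX_def, ← hY_def]
    simp only [hz_def]
    rw [hLF, ← hn_def]
    module
  have hFnorm : ∀ θ, ‖F θ - p‖ ≤ 2 * ε := by
    intro θ
    obtain ⟨hu1, hu2, hu3⟩ := abs_le_one_of_unit u hu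
    obtain ⟨hw1, hw2, hw3⟩ := abs_le_one_of_unit w hw
    have hcos := abs_cos_le_one θ
    have hsin := abs_sin_le_one θ
    apply norm_le_of_comps
    · rw [hFsub θ]
      simp only [add_fst, smul_fst]
      have : ε * Real.cos θ * u.1 + ε * Real.sin θ * w.1
          = ε * Real.cos θ * u.1 + ε * Real.sin θ * w.1 := rfl
      exact comp_abs_bound ε (Real.cos θ) u.1 (Real.sin θ) w.1 hε.le hcos hu1 hsin hw1
    · rw [hFsub θ]
      simp only [add_snd_fst, smul_snd_fst]
      exact comp_abs_bound ε (Real.cos θ) u.2.1 (Real.sin θ) w.2.1 hε.le hcos hu2 hsin hw2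
    · rw [hFsub θ]
      simp only [add_snd_snd, smul_snd_snd]
      exact comp_abs_bound ε (Real.cos θ) u.2.2 (Real.sin θ) w.2.2 hε.le hcos hu3 hsin hw3
  have hzb : ∀ θ, dot3 (z θ) (z θ) ≤ 12 * c'^2 * ε^2 := by
    intro θ
    have hdist : dist (F θ - p) 0 < δ := by
      rw [dist_zero_right]; linarith [hFnorm θ]
    have hb := hbound hdist
    have hfix : p + (F θ - p) = F θ := by abel
    rw [hfix] at hb
    have h1 : ‖z θ‖ ≤ c' * ‖F θ - p‖ := by
      simp only [hz_def]
      rw [hL]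
      exact hb
    have h2 : dot3 (z θ) (z θ) ≤ 3 * ‖z θ‖^2 := dot3_le_norm _
    have h3 : ‖F θ - p‖ ≤ 2 * ε := hFnorm θ
    have h4 : ‖z θ‖ ≤ c' * (2 * ε) := le_trans h1 (mul_le_mul_of_nonneg_left h3 hc'.le)
    have h5 : ‖z θ‖^2 ≤ (c' * (2 * ε))^2 := pow_le_pow_left₀ (norm_nonneg _) h4 2
    calc dot3 (z θ) (z θ) ≤ 3 * ‖z θ‖^2 := h2
      _ ≤ 3 * ((c' * (2 * ε))^2) := by linarith
      _ = 12 * c'^2 * ε^2 := by ring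
  have habs : ∀ θ, (ε * Real.cos θ)^2 + (ε * Real.sin θ)^2 = ε^2 := by
    intro θ; linear_combination ε^2 * (Real.sin_sq_add_cos_sq θ)
  -- no vertical directions on the circle
  have hnoVert : ∀ θ, V (F θ) ≠ n ∧ V (F θ) ≠ -n := by
    intro θ
    constructor
    · intro hvert
      have hsum : (ε * Real.cos θ) • X + (ε * Real.sin θ) • Y = -(z θ) := by
        have h := hVF θ
        rw [hvert] at h
        linear_combination (norm := module) -h
      have hlow := quad_lower (ε * Real.cos θ) (ε * Real.sin θ) X Y
      rw [hsum, habs θ] at hlow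
      have hneg : dot3 (-(z θ)) (-(z θ)) = dot3 (z θ) (z θ) := by
        unfold dot3; simp only [neg_fst, neg_snd_fst, neg_snd_snd]; ring
      rw [hneg] at hlow
      rw [← hG_def, ← hS_def] at hlow
      have h13 : 13 * c'^2 * S ≤ G := by
        have h1 : m ≤ G / S := by rw [hm_def]; exact min_le_left _ _
        have h2 : 13 * c'^2 = m := by rw [hc'2]; ring
        rw [h2]
        exact (le_div_iff₀ hS).mp h1
      have hA : dot3 (z θ) (z θ) * S ≤ 12 * c'^2 * ε^2 * S :=
        mul_le_mul_of_nonneg_right (hzb θ) hS.le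
      have hB : 13 * c'^2 * S * ε^2 ≤ G * ε^2 :=
        mul_le_mul_of_nonneg_right h13 (sq_nonneg ε)
      have hpos : 0 < c'^2 * ε^2 * S := by positivity
      linarith [hlow, hA, hB, hpos]
    · intro hvert
      have hsum : V (F θ) - n = ((ε * Real.cos θ) • X + (ε * Real.sin θ) • Y) + z θ := by
        linear_combination (norm := module) (hVF θ)
      have h4 : dot3 (V (F θ) - n) (V (F θ) - n) = 4 := by
        rw [hvert]
        have hh : -n - n = (-2 : ℝ) • n := by module
        rw [hh, dot3_smul_smul, hn]; norm_num
      have hb1 : dot3 ((ε * Real.cos θ) • X + (ε * Real.sin θ) • Y)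
          ((ε * Real.cos θ) • X + (ε * Real.sin θ) • Y) ≤ 2 * ε^2 * S := by
        have h5 := N2_add_le ((ε * Real.cos θ) • X) ((ε * Real.sin θ) • Y)
        rw [dot3_smul_smul, dot3_smul_smul] at h5
        have hc2 : (ε * Real.cos θ) * (ε * Real.cos θ) ≤ ε^2 := by
          have e : (ε * Real.cos θ) * (ε * Real.cos θ) = (ε * Real.cos θ)^2 := by ring
          rw [e]
          linarith [habs θ, sq_nonneg (ε * Real.sin θ)]
        have hs2' : (ε * Real.sin θ) * (ε * Real.sin θ) ≤ ε^2 := by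
          have e : (ε * Real.sin θ) * (ε * Real.sin θ) = (ε * Real.sin θ)^2 := by ring
          rw [e]
          linarith [habs θ, sq_nonneg (ε * Real.cos θ)]
        have hA1 : (ε * Real.cos θ) * (ε * Real.cos θ) * dot3 X X ≤ ε^2 * dot3 X X :=
          mul_le_mul_of_nonneg_right hc2 (dot3_nonneg X)
        have hA2 : (ε * Real.sin θ) * (ε * Real.sin θ) * dot3 Y Y ≤ ε^2 * dot3 Y Y :=
          mul_le_mul_of_nonneg_right hs2' (dot3_nonneg Y)
        rw [hS_def]
        linarith [h5, hA1, hA2]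
      have h5 : dot3 (V (F θ) - n) (V (F θ) - n) ≤ ε^2 * K := by
        rw [hsum]
        have h6 := N2_add_le ((ε * Real.cos θ) • X + (ε * Real.sin θ) • Y) (z θ)
        have h7 := hzb θ
        rw [hK_def]
        linarith [h6, hb1, h7]
      have h6 : ε * (1 + K) ≤ 1 := (le_div_iff₀ (by positivity)).mp hεK
      have h7 : (ε * (1 + K)) * (ε * (1 + K)) ≤ 1 := by
        have h0 : 0 ≤ ε * (1 + K) := by positivity
        calc (ε * (1 + K)) * (ε * (1 + K)) ≤ 1 * 1 :=
              mul_le_mul h6 h6 h0 zero_le_one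
          _ = 1 := by ring
      have hKle : K ≤ (1 + K)^2 := by
        linarith [sq_nonneg K, hK.le]
      have h8 : ε^2 * K ≤ 1 := by
        have hq : ε^2 * K ≤ ε^2 * (1 + K)^2 :=
          mul_le_mul_of_nonneg_left hKle (sq_nonneg ε)
        have hq2 : ε^2 * (1 + K)^2 = (ε * (1 + K)) * (ε * (1 + K)) := by ring
        linarith [hq, hq2 ▸ h7]
      linarith [h4, h5, h8]
  -- values of the projected-determinant functions on the circle
  have hpFu : ∀ θ, dot3 (p - F θ) u = -(ε * Real.cos θ) := by
    intro θ
    have hst : p - F θ = (-(ε * Real.cos θ)) • u + (-(ε * Real.sin θ)) • w := by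
      simp only [hF_def]; module
    rw [hst, dot3_add_left, dot3_smul_left, dot3_smul_left, hu, hwu]; ring
  have hpFw : ∀ θ, dot3 (p - F θ) w = -(ε * Real.sin θ) := by
    intro θ
    have hst : p - F θ = (-(ε * Real.cos θ)) • u + (-(ε * Real.sin θ)) • w := by
      simp only [hF_def]; module
    rw [hst, dot3_add_left, dot3_smul_left, dot3_smul_left, hw, huw]; ring
  have hqFu : ∀ θ, dot3 (q - F θ) u = s - ε * Real.cos θ := by
    intro θ
    have hst : q - F θ = (q - p) + ((-(ε * Real.cos θ)) • u + (-(ε * Real.sin θ)) • w) := by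
      simp only [hF_def]; module
    rw [hst, dot3_add_left, dot3_add_left, dot3_smul_left, dot3_smul_left, hqpu, hu, hwu]
    ring
  have hqFw : ∀ θ, dot3 (q - F θ) w = -(ε * Real.sin θ) := by
    intro θ
    have hst : q - F θ = (q - p) + ((-(ε * Real.cos θ)) • u + (-(ε * Real.sin θ)) • w) := by
      simp only [hF_def]; module
    rw [hst, dot3_add_left, dot3_add_left, dot3_smul_left, dot3_smul_left, hqpw, hw, huw]
    ring
  have hWθ : ∀ θ, dot3 (V (F θ)) w
      = (ε * Real.cos θ) * γ + (ε * Real.sin θ) * dot3 Y w + dot3 (z θ) w := by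
    intro θ
    rw [hVF θ, dot3_add_left, dot3_add_left, dot3_add_left, dot3_smul_left, dot3_smul_left,
      hnw, ← hγ_def]
    ring
  have hzw : ∀ θ, (dot3 (z θ) w)^2 ≤ 12 * c'^2 * ε^2 := by
    intro θ
    have h1 := cs3 (z θ) w
    rw [hw, mul_one] at h1
    linarith [hzb θ]
  have h13γ : 13 * c'^2 ≤ γ^2 := by
    have h1 : m ≤ γ^2 := by rw [hm_def]; exact min_le_right _ _
    rw [hc'2]; linarith
  -- the two boundary signs
  have hB13 : 13 * c'^2 * ε^2 ≤ γ^2 * ε^2 :=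
    mul_le_mul_of_nonneg_right h13γ (sq_nonneg ε)
  have hcε : 0 < c'^2 * ε^2 := by positivity
  have hW0 : dot3 (V (F 0)) w ≠ 0 := by
    have h1 := hWθ 0
    rw [Real.cos_zero, Real.sin_zero] at h1
    intro h
    rw [h] at h1
    have h2 : dot3 (z 0) w = -(ε * γ) := by linarith [h1]
    have h3 := hzw 0
    rw [h2] at h3
    have h4 : (-(ε * γ))^2 = γ^2 * ε^2 := by ring
    rw [h4] at h3
    linarith [h3, hB13, hcε]
  have hWπ : dot3 (V (F π)) w ≠ 0 := by
    have h1 := hWθ π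
    rw [Real.cos_pi, Real.sin_pi] at h1
    intro h
    rw [h] at h1
    have h2 : dot3 (z π) w = ε * γ := by linarith [h1]
    have h3 := hzw π
    rw [h2] at h3
    have h4 : (ε * γ)^2 = γ^2 * ε^2 := by ring
    rw [h4] at h3
    linarith [h3, hB13, hcε]
  -- the determinant product σ
  set D1 : E3 → ℝ := fun x => dot3 (V x) u * dot3 (p - x) w - dot3 (V x) w * dot3 (p - x) u
    with hD1
  clear_value D1
  set D2 : E3 → ℝ := fun x => dot3 (V x) u * dot3 (q - x) w - dot3 (V x) w * dot3 (q - x) u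
    with hD2
  clear_value D2
  have hσ0 : D1 (F 0) * D2 (F 0) < 0 := by
    have e1 : D1 (F 0) = ε * dot3 (V (F 0)) w := by
      simp only [hD1]
      rw [hpFu 0, hpFw 0, Real.cos_zero, Real.sin_zero]; ring
    have e2 : D2 (F 0) = -((s - ε) * dot3 (V (F 0)) w) := by
      simp only [hD2]
      rw [hqFu 0, hqFw 0, Real.cos_zero, Real.sin_zero]; ring
    have hWpos : 0 < dot3 (V (F 0)) w * dot3 (V (F 0)) w := mul_self_pos.mpr hW0
    rw [e1, e2]
    have key : ε * dot3 (V (F 0)) w * -((s - ε) * dot3 (V (F 0)) w)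
        = -((ε * (s - ε)) * (dot3 (V (F 0)) w * dot3 (V (F 0)) w)) := by ring
    rw [key]
    have hpos2 : 0 < (ε * (s - ε)) * (dot3 (V (F 0)) w * dot3 (V (F 0)) w) :=
      mul_pos (mul_pos hε (by linarith)) hWpos
    linarith [hpos2]
  have hσπ : 0 < D1 (F π) * D2 (F π) := by
    have e1 : D1 (F π) = -(ε * dot3 (V (F π)) w) := by
      simp only [hD1]
      rw [hpFu π, hpFw π, Real.cos_pi, Real.sin_pi]; ring
    have e2 : D2 (F π) = -((s + ε) * dot3 (V (F π)) w) := by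
      simp only [hD2]
      rw [hqFu π, hqFw π, Real.cos_pi, Real.sin_pi]; ring
    have hWpos : 0 < dot3 (V (F π)) w * dot3 (V (F π)) w := mul_self_pos.mpr hWπ
    rw [e1, e2]
    have key : -(ε * dot3 (V (F π)) w) * -((s + ε) * dot3 (V (F π)) w)
        = (ε * (s + ε)) * (dot3 (V (F π)) w * dot3 (V (F π)) w) := by ring
    rw [key]
    exact mul_pos (mul_pos hε (by linarith)) hWpos
  -- continuity of σ and the intermediate value theorem
  have hFc : Continuous F := by
    simp only [hF_def]
    exact (continuous_const.add
      ((continuous_const.mul Real.continuous_cos).smul continuous_const)).add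
      ((continuous_const.mul Real.continuous_sin).smul continuous_const)
  have hVFc : Continuous fun θ => V (F θ) := hVc.comp hFc
  have hcont : Continuous fun θ => D1 (F θ) * D2 (F θ) := by
    simp only [hD1, hD2]
    exact (((cont_dot3 hVFc continuous_const).mul
        (cont_dot3 (continuous_const.sub hFc) continuous_const)).sub
      ((cont_dot3 hVFc continuous_const).mul
        (cont_dot3 (continuous_const.sub hFc) continuous_const))).mul
      ((((cont_dot3 hVFc continuous_const).mul
        (cont_dot3 (continuous_const.sub hFc) continuous_const)).sub
      ((cont_dot3 hVFc continuous_const).mul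
        (cont_dot3 (continuous_const.sub hFc) continuous_const))))
  have hivt := intermediate_value_Icc Real.pi_pos.le hcont.continuousOn
  have h0mem : (0:ℝ) ∈ Set.Icc (D1 (F 0) * D2 (F 0)) (D1 (F π) * D2 (F π)) :=
    ⟨hσ0.le, hσπ.le⟩
  obtain ⟨θ0, _, hθeq⟩ := hivt h0mem
  rcases mul_eq_zero.mp hθeq with h | h
  · exact detD V hVc hunit hlines n u hn hu hnu p (F θ0) (Or.inl hn_def.symm)
      (hnoVert θ0).1 (hnoVert θ0).2 (by rw [← hw_def]; simpa [hD1] using h)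
  · exact detD V hVc hunit hlines n u hn hu hnu q (F θ0) hq2
      (hnoVert θ0).1 (hnoVert θ0).2 (by rw [← hw_def]; simpa [hD2] using h)

end Aux

/-- If `α` is a contact form and every line of the fibration has a distinct parallel
line in the fibration, then `d_pV` has rank exactly 1 everywhere. -/
theorem stmt_7 (V : E3 → E3) (hV : ContDiff ℝ (⊤ : ℕ∞) V) (hfib : IsLineFibration V)
    (hcontact : ∀ p : E3, wedge V p ≠ 0)
    (hpar : ∀ p : E3, ∃ q : E3, line V q ≠ line V p ∧ (V q = V p ∨ V q = -V p)) :
    ∀ p : E3,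
      Module.finrank ℝ (LinearMap.range (fderiv ℝ V p).toLinearMap) = 1 := by
  intro p
  obtain ⟨q, hq1, hq2⟩ := hpar p
  have hline := Aux.lineConst V hV.continuous hfib.1 hfib.2
  have hker0 : fderiv ℝ V p (V p) = 0 := Aux.fderiv_self V hV hline p
  have hfin : Module.finrank ℝ E3 = 3 := by
    rw [Module.finrank_prod, Module.finrank_prod, Module.finrank_self]
  have hsum := LinearMap.finrank_range_add_finrank_ker (fderiv ℝ V p).toLinearMap
  rw [hfin] at hsum
  have hn0 : V p ≠ 0 := by
    intro h
    have h1 := hfib.1 p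
    rw [h] at h1
    unfold dot3 at h1
    simp at h1
  have hkerpos : Module.finrank ℝ (LinearMap.ker (fderiv ℝ V p).toLinearMap) ≠ 0 := by
    intro h0
    have hbot : LinearMap.ker (fderiv ℝ V p).toLinearMap = ⊥ :=
      Submodule.finrank_eq_zero.mp h0
    have hmem : V p ∈ LinearMap.ker (fderiv ℝ V p).toLinearMap := by
      simpa [LinearMap.mem_ker] using hker0
    rw [hbot] at hmem
    exact hn0 (by simpa using hmem)
  have hr0 : Module.finrank ℝ (LinearMap.range (fderiv ℝ V p).toLinearMap) ≠ 0 := by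
    intro h0
    have hbot : LinearMap.range (fderiv ℝ V p).toLinearMap = ⊥ :=
      Submodule.finrank_eq_zero.mp h0
    have hzero : (fderiv ℝ V p).toLinearMap = 0 := LinearMap.range_eq_bot.mp hbot
    have hz : ∀ v : E3, fderiv ℝ V p v = 0 := by
      intro v
      have := congrArg (fun (f : E3 →ₗ[ℝ] E3) => f v) hzero
      simpa using this
    apply hcontact p
    unfold wedge dAlpha
    rw [hz e1, hz e2, hz e3]
    unfold dot3
    simp
  have hr2 : Module.finrank ℝ (LinearMap.range (fderiv ℝ V p).toLinearMap) ≠ 2 :=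
    fun h => Aux.rank_ne_two V hV hfib p q hq1 hq2 h
  omega
end
end

section
/- Let V : ℝ³ → S² define a line fibration such that V(x,y,z) depends only on z and is horizontal: V(x,y,z) = (cos θ(z), −sin θ(z), 0) for a smooth function θ : ℝ → ℝ with θ' nowhere zero and θ(0) = 0. Then the associated contact structure ξ = ker(cos θ(z) dx − sin θ(z) dy) is diffeomorphic to the standard contact structure ξ_st = ker(dz + x dy), i.e. there is a diffeomorphism of ℝ³ carrying ξ to ξ_st. -/
open Real

noncomputable section

/-- The diffeomorphism `Φ(x,y,z) = (z cos θ(y) + (x/θ'(y)) sin θ(y),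
−z sin θ(y) + (x/θ'(y)) cos θ(y), y)`. -/
def PhiMap (θ : ℝ → ℝ) (p : E3) : E3 :=
  (p.2.2 * cos (θ p.2.1) + p.1 / deriv θ p.2.1 * sin (θ p.2.1),
   -p.2.2 * sin (θ p.2.1) + p.1 / deriv θ p.2.1 * cos (θ p.2.1),
   p.2.1)

/-- The inverse of `PhiMap`. -/
def PsiMap (θ : ℝ → ℝ) (q : E3) : E3 :=
  (deriv θ q.2.2 * (q.1 * sin (θ q.2.2) + q.2.1 * cos (θ q.2.2)),
   q.2.2,
   q.1 * cos (θ q.2.2) - q.2.1 * sin (θ q.2.2))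

/-- For `V(x,y,z) = (cos θ(z), -sin θ(z), 0)` with `θ' ≠ 0` and `θ(0) = 0`, the
contact structure `ker (cos θ(z) dx - sin θ(z) dy)` is diffeomorphic to the
standard contact structure `ker (dz + x dy)`: some diffeomorphism `Φ` of `ℝ³`
pulls back `α` to `f ⬝ α_st` with `f` nowhere zero. -/
theorem stmt_10 (θ : ℝ → ℝ) (hθ : ContDiff ℝ (⊤ : ℕ∞) θ) (hθ0 : θ 0 = 0)
    (hθ' : ∀ z, deriv θ z ≠ 0) :
    ∃ Φ : E3 ≃ₜ E3, ContDiff ℝ (⊤ : ℕ∞) (Φ : E3 → E3) ∧ ContDiff ℝ (⊤ : ℕ∞) (Φ.symm : E3 → E3) ∧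
      ∃ f : E3 → ℝ, (∀ p, f p ≠ 0) ∧
        ∀ p u : E3,
          cos (θ ((Φ p).2.2)) * (fderiv ℝ (Φ : E3 → E3) p u).1
            - sin (θ ((Φ p).2.2)) * (fderiv ℝ (Φ : E3 → E3) p u).2.1
            = f p * (u.2.2 + p.1 * u.2.1) := by
  have hθd : ContDiff ℝ (⊤ : ℕ∞) (deriv θ) := by
    rw [← contDiffOn_univ] at hθ ⊢
    exact hθ.deriv_of_isOpen isOpen_univ (by simp)
  have hy : ContDiff ℝ (⊤ : ℕ∞) (fun p : E3 => p.2.1) := contDiff_fst.comp contDiff_snd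
  have hz : ContDiff ℝ (⊤ : ℕ∞) (fun p : E3 => p.2.2) := contDiff_snd.comp contDiff_snd
  have hc : ContDiff ℝ (⊤ : ℕ∞) (fun p : E3 => cos (θ p.2.1)) := contDiff_cos.comp (hθ.comp hy)
  have hs : ContDiff ℝ (⊤ : ℕ∞) (fun p : E3 => sin (θ p.2.1)) := contDiff_sin.comp (hθ.comp hy)
  have hu : ContDiff ℝ (⊤ : ℕ∞) (fun p : E3 => p.1 / deriv θ p.2.1) :=
    contDiff_fst.div (hθd.comp hy) (fun p => hθ' _)
  have hPhi : ContDiff ℝ (⊤ : ℕ∞) (PhiMap θ) :=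
    ((hz.mul hc).add (hu.mul hs)).prodMk (((hz.neg.mul hs).add (hu.mul hc)).prodMk hy)
  have hc2 : ContDiff ℝ (⊤ : ℕ∞) (fun p : E3 => cos (θ p.2.2)) := contDiff_cos.comp (hθ.comp hz)
  have hs2 : ContDiff ℝ (⊤ : ℕ∞) (fun p : E3 => sin (θ p.2.2)) := contDiff_sin.comp (hθ.comp hz)
  have hPsi : ContDiff ℝ (⊤ : ℕ∞) (PsiMap θ) :=
    ((hθd.comp hz).mul ((contDiff_fst.mul hs2).add (hy.mul hc2))).prodMk
      (hz.prodMk ((contDiff_fst.mul hc2).sub (hy.mul hs2)))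
  have hleft : Function.LeftInverse (PsiMap θ) (PhiMap θ) := by
    intro p
    obtain ⟨x, y, z⟩ := p
    have h1 := sin_sq_add_cos_sq (θ y)
    have hd : deriv θ y * (deriv θ y)⁻¹ = 1 := mul_inv_cancel₀ (hθ' y)
    simp only [PhiMap, PsiMap, div_eq_mul_inv]
    refine Prod.ext ?_ (Prod.ext rfl ?_)
    · linear_combination (x * sin (θ y) ^ 2 + x * cos (θ y) ^ 2) * hd + x * h1
    · linear_combination z * h1
  have hright : Function.RightInverse (PsiMap θ) (PhiMap θ) := by
    intro q
    obtain ⟨X, Y, Z⟩ := q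
    have h1 := sin_sq_add_cos_sq (θ Z)
    have hd : deriv θ Z * (deriv θ Z)⁻¹ = 1 := mul_inv_cancel₀ (hθ' Z)
    simp only [PhiMap, PsiMap, div_eq_mul_inv]
    refine Prod.ext ?_ (Prod.ext ?_ rfl)
    · linear_combination (X * sin (θ Z) + Y * cos (θ Z)) * sin (θ Z) * hd + X * h1
    · linear_combination (X * sin (θ Z) + Y * cos (θ Z)) * cos (θ Z) * hd + Y * h1
  refine ⟨⟨⟨PhiMap θ, PsiMap θ, hleft, hright⟩, hPhi.continuous, hPsi.continuous⟩,
    hPhi, hPsi, fun _ => 1, fun _ => one_ne_zero, ?_⟩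
  intro p u
  show cos (θ ((PhiMap θ p).2.2)) * (fderiv ℝ (PhiMap θ) p u).1
      - sin (θ ((PhiMap θ p).2.2)) * (fderiv ℝ (PhiMap θ) p u).2.1
      = 1 * (u.2.2 + p.1 * u.2.1)
  rw [one_mul]
  obtain ⟨x0, y0, z0⟩ := p
  obtain ⟨u1, u2, u3⟩ := u
  set d := deriv θ with hdd
  show cos (θ y0) * (fderiv ℝ (PhiMap θ) (x0, y0, z0) (u1, u2, u3)).1
      - sin (θ y0) * (fderiv ℝ (PhiMap θ) (x0, y0, z0) (u1, u2, u3)).2.1 = u3 + x0 * u2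
  have hφ : HasDerivAt (fun t : ℝ => ((x0, y0, z0) : E3) + t • ((u1, u2, u3) : E3))
      ((u1, u2, u3) : E3) 0 := by
    simpa using ((hasDerivAt_id (0:ℝ)).smul_const ((u1, u2, u3) : E3)).const_add
      ((x0, y0, z0) : E3)
  have hF : HasDerivAt (fun t : ℝ => PhiMap θ (((x0, y0, z0) : E3) + t • (u1, u2, u3)))
      (fderiv ℝ (PhiMap θ) (x0, y0, z0) (u1, u2, u3)) 0 := by
    have h0 : (((x0, y0, z0) : E3) + (0:ℝ) • (u1, u2, u3)) = ((x0, y0, z0) : E3) := by simp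
    have hfd : HasFDerivAt (PhiMap θ) (fderiv ℝ (PhiMap θ) (x0, y0, z0))
        (((x0, y0, z0) : E3) + (0:ℝ) • (u1, u2, u3)) := by
      rw [h0]; exact (hPhi.differentiable (by simp) _).hasFDerivAt
    simpa [Function.comp_def] using hfd.comp_hasDerivAt 0 hφ
  set A := fderiv ℝ (PhiMap θ) (x0, y0, z0) (u1, u2, u3) with hA
  have hF1 : HasDerivAt (fun t : ℝ => (PhiMap θ (((x0, y0, z0) : E3) + t • (u1, u2, u3))).1)
      A.1 0 := by
    simpa [Function.comp_def] using
      (ContinuousLinearMap.fst ℝ ℝ (ℝ × ℝ)).hasFDerivAt.comp_hasDerivAt 0 hF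
  have hF2 : HasDerivAt (fun t : ℝ => (PhiMap θ (((x0, y0, z0) : E3) + t • (u1, u2, u3))).2.1)
      A.2.1 0 := by
    simpa [Function.comp_def] using
      ((ContinuousLinearMap.fst ℝ ℝ ℝ).comp
        (ContinuousLinearMap.snd ℝ ℝ (ℝ × ℝ))).hasFDerivAt.comp_hasDerivAt 0 hF
  have hG : HasDerivAt
      (fun t : ℝ => cos (θ y0) * (PhiMap θ (((x0, y0, z0) : E3) + t • (u1, u2, u3))).1
        - sin (θ y0) * (PhiMap θ (((x0, y0, z0) : E3) + t • (u1, u2, u3))).2.1)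
      (cos (θ y0) * A.1 - sin (θ y0) * A.2.1) 0 :=
    (hF1.const_mul _).sub (hF2.const_mul _)
  have hY : HasDerivAt (fun t : ℝ => y0 + t * u2) u2 0 := by
    simpa using ((hasDerivAt_id (0:ℝ)).mul_const u2).const_add y0
  have hθc : HasDerivAt (fun t : ℝ => θ (y0 + t * u2)) (d (y0 + 0 * u2) * u2) 0 := by
    simpa [Function.comp_def, hdd] using
      (HasDerivAt.comp 0 ((hθ.differentiable (by simp) (y0 + 0 * u2)).hasDerivAt) hY)
  have hdc : HasDerivAt (fun t : ℝ => d (y0 + t * u2)) (deriv d (y0 + 0 * u2) * u2) 0 := by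
    simpa [Function.comp_def] using
      (HasDerivAt.comp 0 ((hθd.differentiable (by simp) (y0 + 0 * u2)).hasDerivAt) hY)
  have hX : HasDerivAt (fun t : ℝ => x0 + t * u1) u1 0 := by
    simpa using ((hasDerivAt_id (0:ℝ)).mul_const u1).const_add x0
  have hZ : HasDerivAt (fun t : ℝ => z0 + t * u3) u3 0 := by
    simpa using ((hasDerivAt_id (0:ℝ)).mul_const u3).const_add z0
  have hq : HasDerivAt (fun t : ℝ => (x0 + t * u1) / d (y0 + t * u2))
      ((u1 * d (y0 + 0 * u2) - (x0 + 0 * u1) * (deriv d (y0 + 0 * u2) * u2))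
        / d (y0 + 0 * u2) ^ 2) 0 := hX.div hdc (hθ' _)
  have hH : HasDerivAt
      (fun t : ℝ => cos (θ y0) * ((z0 + t * u3) * cos (θ (y0 + t * u2))
          + (x0 + t * u1) / d (y0 + t * u2) * sin (θ (y0 + t * u2)))
        - sin (θ y0) * (-(z0 + t * u3) * sin (θ (y0 + t * u2))
          + (x0 + t * u1) / d (y0 + t * u2) * cos (θ (y0 + t * u2)))) _ 0 :=
    (((hZ.mul hθc.cos).add (hq.mul hθc.sin)).const_mul (cos (θ y0))).sub
      (((hZ.neg.mul hθc.sin).add (hq.mul hθc.cos)).const_mul (sin (θ y0)))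
  have heq : (fun t : ℝ => cos (θ y0) * (PhiMap θ (((x0, y0, z0) : E3) + t • (u1, u2, u3))).1
        - sin (θ y0) * (PhiMap θ (((x0, y0, z0) : E3) + t • (u1, u2, u3))).2.1)
      = (fun t : ℝ => cos (θ y0) * ((z0 + t * u3) * cos (θ (y0 + t * u2))
          + (x0 + t * u1) / d (y0 + t * u2) * sin (θ (y0 + t * u2)))
        - sin (θ y0) * (-(z0 + t * u3) * sin (θ (y0 + t * u2))
          + (x0 + t * u1) / d (y0 + t * u2) * cos (θ (y0 + t * u2)))) := by
    funext t
    simp [PhiMap, Prod.smul_fst, Prod.smul_snd, smul_eq_mul, hdd]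
  rw [heq] at hG
  have key := hG.unique hH
  have h1 := sin_sq_add_cos_sq (θ y0)
  have hd : d y0 * (d y0)⁻¹ = 1 := mul_inv_cancel₀ (hθ' y0)
  simp only [zero_mul, add_zero, Pi.neg_apply] at key
  rw [key]
  simp only [div_eq_mul_inv]
  ring_nf
  linear_combination (u3 + x0 * u2) * h1 + x0 * u2 * (sin (θ y0) ^ 2 + cos (θ y0) ^ 2) * hd
end
end

section
/- Let D ⊂ ℝ² be a closed disc of radius ε centered at p₀, let p₁ ∈ ℝ² lie outside D, and suppose W : ∂D → ℝ² \ {0} is continuous with winding number 1 around 0 as p traverses ∂D. Then there exist at least two points p ∈ ∂D at which W(p) is a (real) scalar multiple of p − p₁. -/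
open Real

noncomputable section

abbrev E2 : Type := EuclideanSpace ℝ (Fin 2)

/-- The circle of radius `ε` about `p₀`, parametrised by angle. -/
def circ (p₀ : E2) (ε t : ℝ) : E2 :=
  p₀ + (ε * cos t) • EuclideanSpace.single (0 : Fin 2) (1 : ℝ)
     + (ε * sin t) • EuclideanSpace.single (1 : Fin 2) (1 : ℝ)

lemma e2_decomp (x : E2) :
    x = x 0 • EuclideanSpace.single (0 : Fin 2) (1 : ℝ)
      + x 1 • EuclideanSpace.single (1 : Fin 2) (1 : ℝ) := by
  ext i
  fin_cases i <;> simp [EuclideanSpace.single_apply]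

lemma circ_apply0 (p₀ : E2) (ε t : ℝ) : circ p₀ ε t 0 = p₀ 0 + ε * cos t := by
  simp [circ, EuclideanSpace.single_apply]

lemma circ_apply1 (p₀ : E2) (ε t : ℝ) : circ p₀ ε t 1 = p₀ 1 + ε * sin t := by
  simp [circ, EuclideanSpace.single_apply]

lemma circ_two_pi (p₀ : E2) (ε : ℝ) : circ p₀ ε (2 * π) = circ p₀ ε 0 := by
  simp [circ]

set_option maxHeartbeats 1600000 in
/-- If `W` is a continuous nowhere-zero vector field on the circle `∂D` of radius `ε`
about `p₀` with winding number 1 (witnessed by a continuous polar representation),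
and `p₁` lies outside the closed disc, then there are at least two points of the
circle at which `W` is a scalar multiple of `p - p₁`. -/
theorem stmt_11 (p₀ p₁ : E2) (ε : ℝ) (hε : 0 < ε)
    (hp₁ : p₁ ∉ Metric.closedBall p₀ ε)
    (W : E2 → E2) (hW : ContinuousOn W (Metric.sphere p₀ ε))
    (hWne : ∀ p ∈ Metric.sphere p₀ ε, W p ≠ 0)
    (φ ρ : ℝ → ℝ) (hφ : Continuous φ) (hρ : Continuous ρ) (hρpos : ∀ t, 0 < ρ t)
    (hrep : ∀ t : ℝ, W (circ p₀ ε t)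
      = ρ t • ((cos (φ t)) • EuclideanSpace.single (0 : Fin 2) (1 : ℝ)
             + (sin (φ t)) • EuclideanSpace.single (1 : Fin 2) (1 : ℝ)))
    (hwind : φ (2 * π) = φ 0 + 2 * π) :
    ∃ t₁ ∈ Set.Ico (0 : ℝ) (2 * π), ∃ t₂ ∈ Set.Ico (0 : ℝ) (2 * π), t₁ ≠ t₂ ∧
      (∃ s : ℝ, W (circ p₀ ε t₁) = s • (circ p₀ ε t₁ - p₁)) ∧
      (∃ s : ℝ, W (circ p₀ ε t₂) = s • (circ p₀ ε t₂ - p₁)) := by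
  -- the coordinates of u = p₀ - p₁
  set u0 : ℝ := p₀ 0 - p₁ 0 with hu0
  set u1 : ℝ := p₀ 1 - p₁ 1 with hu1
  set L : ℝ := Real.sqrt (u0 ^ 2 + u1 ^ 2) with hLdef
  have hdist : ε < dist p₁ p₀ := by simpa [Metric.mem_closedBall, not_le] using hp₁
  have hdist' : dist p₁ p₀ = L := by
    rw [EuclideanSpace.dist_eq]
    norm_num [Fin.sum_univ_two, sq, Real.dist_eq, abs_mul_abs_self, hLdef]
    ring_nf
    rw [hu0, hu1]; ring_nf
  have hεL : ε < L := hdist' ▸ hdist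
  have hLpos : 0 < L := lt_trans hε hεL
  have hL2 : L ^ 2 = u0 ^ 2 + u1 ^ 2 := Real.sq_sqrt (by positivity)
  -- complex number for u
  set c : ℂ := (u0 : ℂ) + (u1 : ℂ) * Complex.I with hc
  have hcre : c.re = u0 := by simp [hc]
  have hcim : c.im = u1 := by simp [hc]
  have hcne : c ≠ 0 := by
    intro h
    have : u0 = 0 ∧ u1 = 0 := ⟨by rw [← hcre, h]; simp, by rw [← hcim, h]; simp⟩
    nlinarith [this.1, this.2, hL2, hLpos]
  -- the vector field v t = circ t - p₁, as a complex number
  set v : ℝ → E2 := fun t => circ p₀ ε t - p₁ with hv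
  set q : ℝ → ℂ := fun t => ((v t 0 : ℝ) : ℂ) + ((v t 1 : ℝ) : ℂ) * Complex.I with hq
  have hv0 : ∀ t, v t 0 = ε * cos t + u0 := by
    intro t; simp [hv, circ_apply0, hu0]; ring
  have hv1 : ∀ t, v t 1 = ε * sin t + u1 := by
    intro t; simp [hv, circ_apply1, hu1]; ring
  set w : ℝ → ℂ := fun t => q t * (starRingEnd ℂ) c with hw
  -- positivity of re (w t)
  have hwre : ∀ t, 0 < (w t).re := by
    intro t
    have : (w t).re = v t 0 * u0 + v t 1 * u1 := by
      simp [hw, hq, Complex.mul_re, hcre, hcim]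
    rw [this, hv0, hv1]
    have hS : (u0 * cos t + u1 * sin t) ^ 2 ≤ L ^ 2 := by
      nlinarith [sq_nonneg (u0 * sin t - u1 * cos t), sin_sq_add_cos_sq t, hL2]
    have hS2 : -L ≤ u0 * cos t + u1 * sin t := by nlinarith [hS, hLpos]
    nlinarith [hS2, hεL, hε, hLpos, hL2]
  have hwne : ∀ t, w t ≠ 0 := fun t h => by simpa [h] using (hwre t)
  have hqne : ∀ t, q t ≠ 0 := by
    intro t h
    apply hwne t
    simp [hw, h]
  -- continuous angle function
  set ψ : ℝ → ℝ := fun t => Complex.arg c + Complex.arg (w t) with hψ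
  have hvcont : Continuous v := by
    apply Continuous.sub _ continuous_const
    unfold circ
    fun_prop
  have hqcont : Continuous q := by
    apply Continuous.add
    · exact Complex.continuous_ofReal.comp (continuous_apply 0 |>.comp (PiLp.continuous_ofLp 2 _ |>.comp hvcont))
    · exact (Complex.continuous_ofReal.comp (continuous_apply 1 |>.comp (PiLp.continuous_ofLp 2 _ |>.comp hvcont))).mul
        continuous_const
  have hwcont : Continuous w := hqcont.mul continuous_const
  have hψcont : Continuous ψ := by
    apply continuous_const.add
    rw [continuous_iff_continuousAt]
    intro t
    exact (Complex.continuousAt_arg (Or.inl (hwre t))).comp hwcont.continuousAt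
  -- key identity: q t = |q t| exp(ψ t * I)
  have hkey : ∀ t, q t = (‖q t‖ : ℂ) * Complex.exp (ψ t * Complex.I) := by
    intro t
    have hconjne : (starRingEnd ℂ) c ≠ 0 := by simpa using hcne
    apply mul_right_cancel₀ hconjne
    have e1 : Complex.exp ((ψ t : ℝ) * Complex.I)
        = Complex.exp (Complex.arg c * Complex.I) * Complex.exp (Complex.arg (w t) * Complex.I) := by
      rw [← Complex.exp_add]
      congr 1
      push_cast [hψ]
      ring
    have e2 : Complex.exp (Complex.arg c * Complex.I) * (starRingEnd ℂ) c = ‖c‖ := by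
      have h1 : (starRingEnd ℂ) c = (‖c‖ : ℂ) * Complex.exp ((c.arg : ℂ) * -Complex.I) := by
        conv_lhs => rw [← Complex.norm_mul_exp_arg_mul_I c]
        rw [map_mul, ← Complex.exp_conj, map_mul, Complex.conj_ofReal, Complex.conj_I,
          Complex.conj_ofReal]
      rw [h1]
      calc Complex.exp ((c.arg : ℂ) * Complex.I)
            * ((‖c‖ : ℂ) * Complex.exp ((c.arg : ℂ) * -Complex.I))
          = (‖c‖ : ℂ)
            * Complex.exp ((c.arg : ℂ) * Complex.I + (c.arg : ℂ) * -Complex.I) := by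
            rw [Complex.exp_add]; ring
        _ = (‖c‖ : ℂ) := by
            rw [show ((c.arg : ℂ) * Complex.I + (c.arg : ℂ) * -Complex.I : ℂ) = 0 by ring,
              Complex.exp_zero, mul_one]
    have hwabs : (‖w t‖ : ℂ) = (‖q t‖ : ℂ) * (‖c‖ : ℂ) := by
      rw [show (w t) = q t * (starRingEnd ℂ) c from rfl, norm_mul, Complex.norm_conj]
      push_cast; ring
    have main : (‖q t‖ : ℂ) * Complex.exp ((ψ t : ℝ) * Complex.I) * (starRingEnd ℂ) c
        = w t := by
      rw [e1]
      calc (‖q t‖ : ℂ) *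
            (Complex.exp (Complex.arg c * Complex.I) * Complex.exp (Complex.arg (w t) * Complex.I))
            * (starRingEnd ℂ) c
          = (‖q t‖ : ℂ) * Complex.exp (Complex.arg (w t) * Complex.I)
            * (Complex.exp (Complex.arg c * Complex.I) * (starRingEnd ℂ) c) := by ring
        _ = (‖q t‖ : ℂ) * Complex.exp (Complex.arg (w t) * Complex.I)
            * (‖c‖ : ℂ) := by rw [e2]
        _ = ((‖q t‖ : ℂ) * (‖c‖ : ℂ))
            * Complex.exp (Complex.arg (w t) * Complex.I) := by ring
        _ = (‖w t‖ : ℂ) * Complex.exp (Complex.arg (w t) * Complex.I) := by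
            rw [hwabs]
        _ = w t := Complex.norm_mul_exp_arg_mul_I (w t)
    exact main.symm
  -- coordinates of v in terms of ψ
  set r : ℝ → ℝ := fun t => ‖q t‖ with hr
  have hrpos : ∀ t, 0 < r t := fun t => by simpa [hr] using (norm_pos_iff.mpr (hqne t))
  have hkey' : ∀ t, q t = ((r t * cos (ψ t) : ℝ) : ℂ) + ((r t * sin (ψ t) : ℝ) : ℂ) * Complex.I := by
    intro t
    rw [hkey t, Complex.exp_mul_I, ← Complex.ofReal_cos, ← Complex.ofReal_sin]
    push_cast
    ring
  have hcoord0 : ∀ t, v t 0 = r t * cos (ψ t) := by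
    intro t
    have h := congrArg Complex.re (hkey' t)
    simpa [hq, ← Complex.ofReal_cos, ← Complex.ofReal_sin, Complex.ofReal_re] using h
  have hcoord1 : ∀ t, v t 1 = r t * sin (ψ t) := by
    intro t
    have h := congrArg Complex.im (hkey' t)
    simpa [hq, ← Complex.ofReal_cos, ← Complex.ofReal_sin, Complex.ofReal_re] using h
  -- ψ is periodic
  have hψper : ψ (2 * π) = ψ 0 := by
    have hv' : v (2 * π) = v 0 := by simp [hv, circ_two_pi]
    simp [hψ, hw, hq, hv']
  -- collinearity criterion
  have hcol : ∀ t : ℝ, ∀ m : ℤ, φ t - ψ t = (m : ℝ) * π →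
      ∃ s : ℝ, W (circ p₀ ε t) = s • (circ p₀ ε t - p₁) := by
    intro t m hm
    refine ⟨ρ t * (-1 : ℝ) ^ m / r t, ?_⟩
    have hφt : φ t = ψ t + (m : ℝ) * π := by linarith
    have hcos : cos (φ t) = (-1 : ℝ) ^ m * cos (ψ t) := by
      rw [hφt, Real.cos_add_int_mul_pi]
    have hsin : sin (φ t) = (-1 : ℝ) ^ m * sin (ψ t) := by
      rw [hφt, Real.sin_add_int_mul_pi]
    have hvd : circ p₀ ε t - p₁
        = (r t * cos (ψ t)) • EuclideanSpace.single (0 : Fin 2) (1 : ℝ)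
          + (r t * sin (ψ t)) • EuclideanSpace.single (1 : Fin 2) (1 : ℝ) := by
      rw [show circ p₀ ε t - p₁ = v t from rfl]
      conv_lhs => rw [e2_decomp (v t)]
      rw [hcoord0 t, hcoord1 t]
    rw [hrep t, hvd]
    have hrne : r t ≠ 0 := ne_of_gt (hrpos t)
    rw [smul_add, smul_add, smul_smul, smul_smul, smul_smul, smul_smul, hcos, hsin]
    congr 1
    · congr 1
      field_simp
    · congr 1
      field_simp
  -- the winding function
  set g : ℝ → ℝ := fun t => φ t - ψ t with hg
  have hgcont : Continuous g := hφ.sub hψcont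
  have hπpos : (0 : ℝ) < π := Real.pi_pos
  have hg2π : g (2 * π) = g 0 + 2 * π := by
    simp only [hg, hwind, hψper]
    ring
  set k : ℤ := ⌈g 0 / π⌉ with hk
  have hk1 : g 0 ≤ (k : ℝ) * π := by
    have h := Int.le_ceil (g 0 / π)
    calc g 0 = (g 0 / π) * π := by field_simp
      _ ≤ (k : ℝ) * π := mul_le_mul_of_nonneg_right h hπpos.le
  have hk2 : (k : ℝ) * π < g 0 + π := by
    have h := Int.ceil_lt_add_one (g 0 / π)
    have h2 : (k : ℝ) * π < (g 0 / π + 1) * π := mul_lt_mul_of_pos_right h hπpos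
    have h3 : (g 0 / π + 1) * π = g 0 + π := by field_simp
    exact h2.trans_eq h3
  -- IVT
  have hIcc : Set.Icc (g 0) (g (2 * π)) ⊆ g '' Set.Icc 0 (2 * π) :=
    intermediate_value_Icc (by positivity) hgcont.continuousOn
  obtain ⟨t1, ht1m, hg1⟩ : ∃ t ∈ Set.Icc (0 : ℝ) (2 * π), g t = (k : ℝ) * π := by
    obtain ⟨t, ht, hgt⟩ := hIcc (show (k : ℝ) * π ∈ Set.Icc (g 0) (g (2 * π)) from
      ⟨hk1, by rw [hg2π]; linarith⟩)
    exact ⟨t, ht, hgt⟩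
  obtain ⟨t2, ht2m, hg2⟩ : ∃ t ∈ Set.Icc (0 : ℝ) (2 * π), g t = ((k + 1 : ℤ) : ℝ) * π := by
    obtain ⟨t, ht, hgt⟩ := hIcc (show ((k + 1 : ℤ) : ℝ) * π ∈ Set.Icc (g 0) (g (2 * π)) from
      ⟨by push_cast; linarith, by rw [hg2π]; push_cast; linarith⟩)
    exact ⟨t, ht, hgt⟩
  -- adjust endpoints into Ico
  have adjust : ∀ j : ℤ, ∀ t ∈ Set.Icc (0 : ℝ) (2 * π), g t = (j : ℝ) * π →
      ∃ t' ∈ Set.Ico (0 : ℝ) (2 * π), ∃ j' : ℤ, (j' = j ∨ j' = j - 2) ∧ g t' = (j' : ℝ) * π := by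
    intro j t ht hgt
    rcases lt_or_eq_of_le ht.2 with h | h
    · exact ⟨t, ⟨ht.1, h⟩, j, Or.inl rfl, hgt⟩
    · refine ⟨0, ⟨le_refl 0, by positivity⟩, j - 2, Or.inr rfl, ?_⟩
      rw [h] at hgt
      have e : g 0 = (j : ℝ) * π - 2 * π := by linarith [hg2π]
      rw [e]
      push_cast
      ring
  obtain ⟨t₁, ht₁, j₁, hj₁, hgj₁⟩ := adjust k t1 ht1m hg1
  obtain ⟨t₂, ht₂, j₂, hj₂, hgj₂⟩ := adjust (k + 1) t2 ht2m hg2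
  have hne : t₁ ≠ t₂ := by
    intro h
    have h1 : (j₁ : ℝ) * π = (j₂ : ℝ) * π := by rw [← hgj₁, ← hgj₂, h]
    have h2 : j₁ = j₂ := by
      have := mul_right_cancel₀ (ne_of_gt hπpos) h1
      exact_mod_cast this
    omega
  exact ⟨t₁, ht₁, t₂, ht₂, hne, hcol t₁ j₁ hgj₁, hcol t₂ j₂ hgj₂⟩
end
end

section
/- Suppose V : ℝ³ → S² defines a line fibration and d_pV has rank 1 for every p. If γ is a regular smooth curve in an affine plane P orthogonal to a fixed direction V₀, with V ≡ V₀ along γ, and γ has nonvanishing curvature at some point, then V ≡ V₀ on a nonempty open subset of ℝ³ — a contradiction. Consequently, any regular plane curve along which V is constant and whose fiber lines sweep out a plane-orthogonal projection must be a straight line. -/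
open Real

noncomputable section

namespace Aux13

def cross3 (a b : E3) : E3 :=
  (a.2.1*b.2.2 - a.2.2*b.2.1, a.2.2*b.1 - a.1*b.2.2, a.1*b.2.1 - a.2.1*b.1)
def det3 (a b c : E3) : ℝ := dot3 a (cross3 b c)

lemma e3ext {a b : E3} (h1 : a.1 = b.1) (h2 : a.2.1 = b.2.1) (h3 : a.2.2 = b.2.2) : a = b :=
  Prod.ext h1 (Prod.ext h2 h3)

lemma cramer3 (y b c v : E3) :
    det3 b c v • y = det3 y c v • b + det3 b y v • c + det3 b c y • v := by
  refine e3ext ?_ ?_ ?_ <;>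
    simp only [det3, cross3, dot3, Prod.fst_add, Prod.snd_add, Prod.smul_fst, Prod.smul_snd,
      smul_eq_mul] <;> ring

/-- `(d·p)(q×r) + (d·q)(r×p) + (d·r)(p×q) = det(p,q,r) d`. -/
lemma cramer3' (d p q r : E3) :
    dot3 d p • cross3 q r + dot3 d q • cross3 r p + dot3 d r • cross3 p q
      = det3 p q r • d := by
  refine e3ext ?_ ?_ ?_ <;>
    simp only [det3, cross3, dot3, Prod.fst_add, Prod.snd_add, Prod.smul_fst, Prod.smul_snd,
      smul_eq_mul] <;> ring

lemma triple_exp (u v w : E3) : cross3 (cross3 u v) w = dot3 u w • v - dot3 v w • u := by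
  refine e3ext ?_ ?_ ?_ <;>
    simp only [cross3, dot3, Prod.fst_sub, Prod.snd_sub, Prod.smul_fst, Prod.smul_snd,
      smul_eq_mul] <;> ring

lemma triple_exp' (u v w : E3) : cross3 u (cross3 v w) = dot3 u w • v - dot3 u v • w := by
  refine e3ext ?_ ?_ ?_ <;>
    simp only [cross3, dot3, Prod.fst_sub, Prod.snd_sub, Prod.smul_fst, Prod.smul_snd,
      smul_eq_mul] <;> ring

lemma dot3_comm (a b : E3) : dot3 a b = dot3 b a := by simp only [dot3]; ring
lemma dot3_sub_left (a b c : E3) : dot3 (a - b) c = dot3 a c - dot3 b c := by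
  simp only [dot3, Prod.fst_sub, Prod.snd_sub]; ring
lemma dot3_add_left (a b c : E3) : dot3 (a + b) c = dot3 a c + dot3 b c := by
  simp only [dot3, Prod.fst_add, Prod.snd_add]; ring
lemma dot3_smul_left (r : ℝ) (a c : E3) : dot3 (r • a) c = r * dot3 a c := by
  simp only [dot3, Prod.smul_fst, Prod.smul_snd, smul_eq_mul]; ring
lemma dot3_smul_right (r : ℝ) (a c : E3) : dot3 a (r • c) = r * dot3 a c := by
  simp only [dot3, Prod.smul_fst, Prod.smul_snd, smul_eq_mul]; ring
lemma dot3_self_eq_zero {a : E3} (h : dot3 a a = 0) : a = 0 := by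
  simp only [dot3] at h
  refine e3ext ?_ ?_ ?_ <;>
    · simp only [Prod.fst_zero, Prod.snd_zero]
      nlinarith [sq_nonneg a.1, sq_nonneg a.2.1, sq_nonneg a.2.2]
lemma dot3_cross_left (a b : E3) : dot3 a (cross3 a b) = 0 := by simp only [dot3, cross3]; ring
lemma dot3_cross_right (a b : E3) : dot3 b (cross3 a b) = 0 := by simp only [dot3, cross3]; ring
lemma dot3_cross_cyc (p q r : E3) : dot3 p (cross3 q r) = dot3 r (cross3 p q) := by
  simp only [dot3, cross3]; ring
lemma lagrange (a b : E3) :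
    dot3 (cross3 a b) (cross3 a b) = dot3 a a * dot3 b b - (dot3 a b)^2 := by
  simp only [dot3, cross3]; ring
lemma det3_cyc (p q r : E3) : det3 p q r = dot3 q (cross3 r p) := by
  simp only [det3, dot3, cross3]; ring
lemma det3_cyc' (p q r : E3) : det3 p q r = dot3 r (cross3 p q) := by
  simp only [det3, dot3, cross3]; ring

lemma cont_dot3 (k : E3) : Continuous (fun y : E3 => dot3 y k) := by unfold dot3; fun_prop

/-- if `d` is orthogonal to three independent vectors it is zero -/
lemma perp3 {p q r d : E3} (hdet : det3 p q r ≠ 0) (h1 : dot3 d p = 0) (h2 : dot3 d q = 0)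
    (h3 : dot3 d r = 0) : d = 0 := by
  have h := cramer3' d p q r
  rw [h1, h2, h3] at h
  simp only [zero_smul, add_zero, zero_add] at h
  rcases smul_eq_zero.mp h.symm with h | h
  · exact absurd h hdet
  · exact h

/-- The key pointwise step: if every plane through `x` containing direction `V₀`
(encoded by a normal `n ⊥ V₀`) meets a point `c` with `V c = V₀`, then `V x ∥ V₀`. -/
lemma key (V : E3 → E3) (hfib : IsLineFibration V) (V₀ : E3) (hV₀ : dot3 V₀ V₀ = 1) (x : E3)
    (hmeet : ∀ n : E3, dot3 V₀ n = 0 → ∃ c : E3, V c = V₀ ∧ dot3 (c - x) n = 0) :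
    ∃ r : ℝ, V x = r • V₀ := by
  set μ := dot3 (V x) V₀ with hμ
  set w : E3 := V x - μ • V₀ with hw
  by_cases hw0 : w = 0
  · exact ⟨μ, by rw [← sub_eq_zero]; exact hw ▸ hw0⟩
  have hVx : V x = w + μ • V₀ := by rw [hw]; abel
  have hwV : dot3 w V₀ = 0 := by
    rw [hw, dot3_sub_left, dot3_smul_left, hV₀, ← hμ]; ring
  have hVw : dot3 V₀ w = 0 := by rw [dot3_comm]; exact hwV
  have hww : dot3 w w ≠ 0 := fun h => hw0 (dot3_self_eq_zero h)
  set n : E3 := cross3 V₀ w with hn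
  have hV₀n : dot3 V₀ n = 0 := dot3_cross_left _ _
  obtain ⟨c, hcV, hcn⟩ := hmeet n hV₀n
  set aa := dot3 (c - x) V₀ with haa
  set b' := dot3 (c - x) w with hb'
  -- decomposition of c - x
  have hdet : det3 V₀ w n ≠ 0 := by
    rw [det3_cyc', hn, lagrange, hV₀, hVw]
    simpa using hww
  have hd0 : dot3 w w • (c - x) - (dot3 w w * aa) • V₀ - b' • w = 0 := by
    apply perp3 hdet
    · rw [dot3_sub_left, dot3_sub_left, dot3_smul_left, dot3_smul_left, dot3_smul_left,
        hV₀, hwV, ← haa]; ring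
    · rw [dot3_sub_left, dot3_sub_left, dot3_smul_left, dot3_smul_left, dot3_smul_left,
        hVw, ← hb']; ring
    · rw [dot3_sub_left, dot3_sub_left, dot3_smul_left, dot3_smul_left, dot3_smul_left,
        hcn, hV₀n]
      have : dot3 w n = 0 := by rw [hn]; exact dot3_cross_right _ _
      rw [this]; ring
  have hdc : dot3 w w • (c - x) = (dot3 w w * aa) • V₀ + b' • w := by
    linear_combination (norm := module) hd0
  set ww := dot3 w w with hww'
  set z : E3 := x + (b' / ww) • V x with hz
  have hz1 : z ∈ line V x := ⟨b' / ww, rfl⟩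
  have e1 : ww * (b' / ww) = b' := by field_simp
  have e2 : ww * ((b' * μ - ww * aa) / ww) = b' * μ - ww * aa := by field_simp
  have h5 : ww • z = ww • (c + ((b' * μ - ww * aa) / ww) • V₀) := by
    rw [hz, hVx, smul_add ww x, smul_add ww c, smul_smul, smul_smul, e1, e2]
    linear_combination (norm := module) - hdc
  have hzeq : z = c + ((b' * μ - ww * aa) / ww) • V₀ := smul_right_injective E3 hww h5
  have hz2 : z ∈ line V c := ⟨(b' * μ - ww * aa) / ww, by rw [hcV]; exact hzeq⟩
  rcases hfib.2 x c with he | hd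
  · have hx1 : x ∈ line V c := he ▸ ⟨0, by simp⟩
    have hx2 : x + V x ∈ line V c := he ▸ ⟨1, by rw [one_smul]⟩
    obtain ⟨u₁, h1⟩ := hx1
    obtain ⟨u₂, h2⟩ := hx2
    rw [hcV] at h1 h2
    exact ⟨u₂ - u₁, by linear_combination (norm := module) h2 - h1⟩
  · exact absurd (hd ▸ (⟨hz1, hz2⟩ : z ∈ line V x ∩ line V c)) (Set.notMem_empty z)

/-- sign constancy for a nowhere-zero continuous function -/
lemma signs {f : ℝ → ℝ} (hf : Continuous f) (h : ∀ t, f t ≠ 0) (a b : ℝ) :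
    0 < f a * f b := by
  rcases (h a).lt_or_gt with ha | ha <;> rcases (h b).lt_or_gt with hb | hb
  · exact mul_pos_of_neg_of_neg ha hb
  · exfalso
    have h0 : (0:ℝ) ∈ Set.uIcc (f a) (f b) := by rw [Set.mem_uIcc]; left; exact ⟨ha.le, hb.le⟩
    obtain ⟨t, _, ht⟩ := intermediate_value_uIcc hf.continuousOn h0
    exact h t ht
  · exfalso
    have h0 : (0:ℝ) ∈ Set.uIcc (f a) (f b) := by rw [Set.mem_uIcc]; right; exact ⟨hb.le, ha.le⟩
    obtain ⟨t, _, ht⟩ := intermediate_value_uIcc hf.continuousOn h0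
    exact h t ht
  · exact mul_pos ha hb

end Aux13


/-- If `d_pV` has rank 1 everywhere, then a regular smooth curve lying in an affine
plane orthogonal to `V₀`, along which `V ≡ V₀`, must be a straight line. -/
theorem stmt_13 (V : E3 → E3) (hV : ContDiff ℝ (⊤ : ℕ∞) V) (hfib : IsLineFibration V)
    (hrank : ∀ p : E3,
      Module.finrank ℝ (LinearMap.range (fderiv ℝ V p).toLinearMap) = 1)
    (V₀ : E3) (hV₀ : dot3 V₀ V₀ = 1)
    (γ : ℝ → E3) (hγ : ContDiff ℝ (⊤ : ℕ∞) γ) (hreg : ∀ t : ℝ, deriv γ t ≠ 0)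
    (hplane : ∀ t : ℝ, dot3 (γ t - γ 0) V₀ = 0)
    (hconst : ∀ t : ℝ, V (γ t) = V₀) :
    ∃ a w : E3, ∀ t : ℝ, ∃ r : ℝ, γ t = a + r • w := by
  by_contra hcon
  push_neg at hcon
  obtain ⟨t₁, ht₁⟩ := hcon (γ 0) 0
  have hBA : γ t₁ ≠ γ 0 := by have := ht₁ 0; simpa using this
  obtain ⟨t₂, ht₂⟩ := hcon (γ 0) (γ t₁ - γ 0)
  set a : E3 := γ t₁ - γ 0 with ha
  set b : E3 := γ t₂ - γ 0 with hb
  have ha0 : a ≠ 0 := sub_ne_zero.mpr hBA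
  have hab : ∀ r : ℝ, b ≠ r • a := fun r h =>
    ht₂ r (by rw [ha]; linear_combination (norm := module) h)
  have haV : dot3 a V₀ = 0 := hplane t₁
  have hbV : dot3 b V₀ = 0 := hplane t₂
  set D := Aux13.det3 a b V₀ with hDdef
  -- D ≠ 0, i.e. a, b, V₀ independent
  have hD : D ≠ 0 := by
    intro h0
    have hcV : dot3 V₀ (Aux13.cross3 a b) = 0 := by
      rw [← Aux13.det3_cyc']; exact h0
    have h1 : Aux13.cross3 (Aux13.cross3 a b) V₀ = 0 := by
      rw [Aux13.triple_exp, haV, hbV]; simp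
    have h2 := Aux13.triple_exp' V₀ (Aux13.cross3 a b) V₀
    rw [h1, hV₀, hcV] at h2
    simp only [one_smul, zero_smul, sub_zero] at h2
    have hcr0 : Aux13.cross3 a b = 0 := by
      rw [← h2]
      refine Aux13.e3ext ?_ ?_ ?_ <;> simp [Aux13.cross3]
    have h3 := Aux13.triple_exp a b a
    rw [hcr0] at h3
    have h30 : Aux13.cross3 (0 : E3) a = 0 := by
      refine Aux13.e3ext ?_ ?_ ?_ <;> simp [Aux13.cross3]
    rw [h30] at h3
    have haa : dot3 a a ≠ 0 := fun h => ha0 (Aux13.dot3_self_eq_zero h)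
    have h4 : dot3 a a • b = dot3 b a • a := by
      linear_combination (norm := module) - h3
    apply hab (dot3 b a / dot3 a a)
    rw [div_eq_inv_mul, mul_smul, ← h4, inv_smul_smul₀ haa]
  -- affine coordinates
  set k1 := Aux13.cross3 b V₀ with hk1
  set k2 := Aux13.cross3 V₀ a with hk2
  set k3 := Aux13.cross3 a b with hk3
  set s1 : E3 → ℝ := fun x => dot3 (x - γ 0) k1 with hs1
  set s2 : E3 → ℝ := fun x => dot3 (x - γ 0) k2 with hs2
  set s3 : E3 → ℝ := fun x => dot3 (x - γ 0) k3 with hs3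
  have hcr : ∀ x : E3, D • (x - γ 0) = s1 x • a + s2 x • b + s3 x • V₀ := by
    intro x
    have h := Aux13.cramer3 (x - γ 0) a b V₀
    rw [Aux13.det3_cyc a (x - γ 0) V₀, Aux13.det3_cyc' a b (x - γ 0)] at h
    exact h
  set U : Set E3 :=
    {x | 0 < s1 x * D ∧ 0 < s2 x * D ∧ (s1 x + s2 x - D) * D < 0} with hU
  have hcS : ∀ k : E3, Continuous fun x : E3 => dot3 (x - γ 0) k := by
    intro k
    have : (fun x : E3 => dot3 (x - γ 0) k) = fun x => dot3 x k - dot3 (γ 0) k :=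
      funext fun x => Aux13.dot3_sub_left _ _ _
    rw [this]
    exact (Aux13.cont_dot3 k).sub continuous_const
  have hUopen : IsOpen U := by
    rw [hU]
    simp only [Set.setOf_and]
    exact (isOpen_lt continuous_const ((hcS k1).mul continuous_const)).inter
      ((isOpen_lt continuous_const ((hcS k2).mul continuous_const)).inter
        (isOpen_lt ((((hcS k1).add (hcS k2)).sub continuous_const).mul continuous_const)
          continuous_const))
  -- V is parallel to V₀ on U
  have hkey : ∀ x ∈ U, ∃ r : ℝ, V x = r • V₀ := by
    intro x hx
    apply Aux13.key V hfib V₀ hV₀ x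
    intro n hn0
    by_contra hno
    push_neg at hno
    have hfne : ∀ t : ℝ, dot3 (γ t - x) n ≠ 0 := fun t => hno (γ t) (hconst t)
    set f : ℝ → ℝ := fun t => dot3 (γ t - x) n with hf
    have hfc : Continuous f := by
      have : f = (fun y : E3 => dot3 y n) ∘ (fun t => γ t - x) := rfl
      rw [this]
      exact (Aux13.cont_dot3 n).comp (hγ.continuous.sub continuous_const)
    have hS : (D - s1 x - s2 x) * f 0 + s1 x * f t₁ + s2 x * f t₂ = 0 := by
      have hv : (D - s1 x - s2 x) • (γ 0 - x) + s1 x • (γ t₁ - x) + s2 x • (γ t₂ - x)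
          = (-(s3 x)) • V₀ := by
        linear_combination (norm := module) - hcr x
      calc (D - s1 x - s2 x) * f 0 + s1 x * f t₁ + s2 x * f t₂
          = dot3 ((D - s1 x - s2 x) • (γ 0 - x) + s1 x • (γ t₁ - x) + s2 x • (γ t₂ - x)) n := by
            rw [Aux13.dot3_add_left, Aux13.dot3_add_left, Aux13.dot3_smul_left,
              Aux13.dot3_smul_left, Aux13.dot3_smul_left]
        _ = dot3 ((-(s3 x)) • V₀) n := by rw [hv]
        _ = (-(s3 x)) * dot3 V₀ n := Aux13.dot3_smul_left _ _ _
        _ = 0 := by rw [hn0]; ring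
    have h00 := Aux13.signs hfc hfne 0 0
    have h01 := Aux13.signs hfc hfne 0 t₁
    have h02 := Aux13.signs hfc hfne 0 t₂
    have e : (D - s1 x - s2 x) * D * (f 0 * f 0) + s1 x * D * (f 0 * f t₁)
        + s2 x * D * (f 0 * f t₂)
        = D * f 0 * ((D - s1 x - s2 x) * f 0 + s1 x * f t₁ + s2 x * f t₂) := by ring
    rw [hS, mul_zero] at e
    have c0 : 0 < (D - s1 x - s2 x) * D := by nlinarith [hx.2.2]
    nlinarith [mul_pos c0 h00, mul_pos hx.1 h01, mul_pos hx.2.1 h02, e]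
  -- the barycenter of the triangle
  set p : E3 := γ 0 + (1/3 : ℝ) • a + (1/3 : ℝ) • b with hp'
  have hps : p - γ 0 = (1/3 : ℝ) • a + (1/3 : ℝ) • b := by rw [hp']; abel
  have hs1p : s1 p = (1/3) * D := by
    rw [hs1]
    show dot3 (p - γ 0) k1 = _
    rw [hps, Aux13.dot3_add_left, Aux13.dot3_smul_left, Aux13.dot3_smul_left, hk1,
      Aux13.dot3_cross_left]
    rw [hDdef]
    show 1/3 * Aux13.det3 a b V₀ + 1/3 * 0 = _
    ring
  have hs2p : s2 p = (1/3) * D := by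
    rw [hs2]
    show dot3 (p - γ 0) k2 = _
    rw [hps, Aux13.dot3_add_left, Aux13.dot3_smul_left, Aux13.dot3_smul_left, hk2,
      Aux13.dot3_cross_right, Aux13.dot3_cross_cyc]
    rw [hDdef]
    show 1/3 * 0 + 1/3 * Aux13.det3 a b V₀ = _
    ring
  have hDD : 0 < D * D := by
    rcases hD.lt_or_gt with h | h
    · exact mul_pos_of_neg_of_neg h h
    · exact mul_pos h h
  have hpU : p ∈ U := by
    simp only [hU, Set.mem_setOf_eq]
    refine ⟨by rw [hs1p]; nlinarith [hDD], by rw [hs2p]; nlinarith [hDD],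
      by rw [hs1p, hs2p]; nlinarith [hDD]⟩
  obtain ⟨rp, hrp⟩ := hkey p hpU
  have hrp2 : rp * rp = 1 := by
    have h := hfib.1 p
    rw [hrp, Aux13.dot3_smul_left, Aux13.dot3_smul_right, hV₀] at h
    linear_combination h
  set g : E3 → ℝ := fun x => dot3 (V x) V₀ with hg
  have hgc : Continuous g := (Aux13.cont_dot3 V₀).comp hV.continuous
  have hgp : g p = rp := by
    rw [hg]
    show dot3 (V p) V₀ = rp
    rw [hrp, Aux13.dot3_smul_left, hV₀]; ring
  set W : Set E3 := U ∩ {x | (g x - g p)^2 < 1} with hW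
  have hWopen : IsOpen W :=
    hUopen.inter (isOpen_lt ((hgc.sub continuous_const).pow 2) continuous_const)
  have hpW : p ∈ W := ⟨hpU, by norm_num⟩
  have hVW : ∀ x ∈ W, V x = rp • V₀ := by
    intro x hx
    obtain ⟨r, hr⟩ := hkey x hx.1
    have hr2 : r * r = 1 := by
      have h := hfib.1 x
      rw [hr, Aux13.dot3_smul_left, Aux13.dot3_smul_right, hV₀] at h
      linear_combination h
    have hgx : g x = r := by
      rw [hg]
      show dot3 (V x) V₀ = r
      rw [hr, Aux13.dot3_smul_left, hV₀]; ring
    have hlt : (r - rp)^2 < 1 := by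
      have := hx.2
      rwa [Set.mem_setOf_eq, hgx, hgp] at this
    have h6 : 0 < r * rp := by nlinarith
    have h7 : (r - rp) * (r + rp) = 0 := by linear_combination hr2 - hrp2
    rcases mul_eq_zero.mp h7 with h | h
    · rw [hr, sub_eq_zero.mp h]
    · exfalso
      have hrr : r = -rp := by linarith
      rw [hrr] at h6
      nlinarith [hrp2]
  have hf0 : fderiv ℝ V p = 0 := by
    have he : V =ᶠ[nhds p] fun _ => rp • V₀ := by
      filter_upwards [hWopen.mem_nhds hpW] with y hy using hVW y hy
    rw [he.fderiv_eq, fderiv_fun_const]; rfl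
  have hr1 := hrank p
  rw [hf0] at hr1
  rw [ContinuousLinearMap.coe_zero, LinearMap.range_zero, finrank_bot] at hr1
  exact absurd hr1 (by norm_num)
end
end
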